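/- arXiv:2109.12954 — 4 statements merged into one kernel-verified Lean document; each statement's English description precedes it below -/
import Mathlib

section
/- Let (C,E,s) be an n-exangulated category and suppose the 0-th differential [f₀; g₀] : A₀ → A₁ ⊕ B₁ of a distinguished n-exangle A₀ → A₁ ⊕ B₁ →([f₁,g₁]) A₂ → ⋯ → A_{n+1} satisfies g₀ = 0. Then g₁ : B₁ → A₂ is a split monomorphism (a section). -/
open CategoryTheory CategoryTheory.Limits Opposite ZeroObject

universe v u

namespace NExangPaper

attribute [local instance] CategoryTheory.Limits.hasBinaryBiproducts_of_finite_biproducts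


variable {C : Type u} [Category.{v} C] [Preadditive C]

/-- `f : X ⟶ Y` lies in the Jacobson radical `rad_C` of the preadditive category `C`:
this is the standard characterization `∀ g, 𝟙 X - g ∘ f` is invertible, which for a
Krull–Schmidt category agrees with the ideal whose value at `(A,A)` is the Jacobson
radical of `End A`. -/
def InRad {X Y : C} (f : X ⟶ Y) : Prop := ∀ g : Y ⟶ X, IsIso (𝟙 X - f ≫ g)

/-- `C` is a Krull–Schmidt category: every object is a finite direct sum of objects with
local endomorphism rings. -/
def IsKrullSchmidt (C : Type u) [Category.{v} C] [Preadditive C] [HasFiniteBiproducts C] : Prop :=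
  ∀ X : C, ∃ (k : ℕ) (Y : Fin k → C) (_ : X ≅ ⨁ Y), ∀ i, IsLocalRing (End (Y i))

/-- `Z` belongs to `add W`, i.e. `Z` is a direct summand of a finite direct sum of copies of `W`. -/
def InAdd {C : Type u} [Category.{v} C] [Preadditive C] [HasFiniteBiproducts C]
    (W Z : C) : Prop :=
  ∃ (k : ℕ) (r : Z ⟶ ⨁ fun _ : Fin k => W) (s : (⨁ fun _ : Fin k => W) ⟶ Z), r ≫ s = 𝟙 Z

/-- An object of the category `C^{n+2}_C` of complexes concentrated in degrees `0,…,n+1`.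
(The terms in degrees `> n+1` are irrelevant junk; all conditions only concern degrees
`0,…,n+1`.) -/
structure NComplex (C : Type u) [Category.{v} C] [Preadditive C] (n : ℕ) where
  X : ℕ → C
  d : ∀ i, X i ⟶ X (i + 1)
  dd : ∀ i, i + 1 ≤ n → d i ≫ d (i + 1) = 0

variable {n : ℕ}

/-- A morphism of complexes concentrated in degrees `0,…,n+1`. -/
@[ext]
structure ChainMap (X Y : NComplex C n) where
  f : ∀ i, X.X i ⟶ Y.X i
  comm : ∀ i, i ≤ n → X.d i ≫ f (i + 1) = f i ≫ Y.d i

def ChainMap.id (X : NComplex C n) : ChainMap X X where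
  f _ := 𝟙 _
  comm _ _ := by simp

def ChainMap.comp {X Y Z : NComplex C n} (φ : ChainMap X Y) (ψ : ChainMap Y Z) :
    ChainMap X Z where
  f i := φ.f i ≫ ψ.f i
  comm i hi := by rw [← Category.assoc, φ.comm i hi, Category.assoc, ψ.comm i hi,
    ← Category.assoc]

/-- A chain homotopy between two morphisms of complexes concentrated in degrees `0,…,n+1`. -/
structure Homotopy' {X Y : NComplex C n} (φ ψ : ChainMap X Y) where
  s : ∀ i, X.X (i + 1) ⟶ Y.X i
  comm0 : φ.f 0 - ψ.f 0 = X.d 0 ≫ s 0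
  comm : ∀ i, i + 1 ≤ n → φ.f (i + 1) - ψ.f (i + 1) = s i ≫ Y.d i + X.d (i + 1) ≫ s (i + 1)
  commTop : φ.f (n + 1) - ψ.f (n + 1) = s n ≫ Y.d n

/-- Homotopy equivalence of complexes concentrated in degrees `0,…,n+1`. -/
def HtpyEquiv (X Y : NComplex C n) : Prop :=
  ∃ (φ : ChainMap X Y) (ψ : ChainMap Y X),
    Nonempty (Homotopy' (φ.comp ψ) (ChainMap.id X)) ∧
    Nonempty (Homotopy' (ψ.comp φ) (ChainMap.id Y))

/-- Homotopy equivalence with identities at the two ends (i.e. homotopy equivalence in the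
category `C^{n+2}_{(A,C)}` of complexes with fixed end terms). -/
def FixedHtpyEquiv (X Y : NComplex C n) (h0 : X.X 0 = Y.X 0)
    (h1 : X.X (n + 1) = Y.X (n + 1)) : Prop :=
  ∃ (φ : ChainMap X Y) (ψ : ChainMap Y X),
    φ.f 0 = eqToHom h0 ∧ φ.f (n + 1) = eqToHom h1 ∧
    ψ.f 0 = eqToHom h0.symm ∧ ψ.f (n + 1) = eqToHom h1.symm ∧
    Nonempty (Homotopy' (φ.comp ψ) (ChainMap.id X)) ∧
    Nonempty (Homotopy' (ψ.comp φ) (ChainMap.id Y))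

/-- An isomorphism of complexes concentrated in degrees `0,…,n+1` (levelwise isomorphisms in
the relevant degrees, commuting with the differentials). -/
structure CpxIso (X Y : NComplex C n) where
  e : ∀ i, i ≤ n + 1 → (X.X i ≅ Y.X i)
  comm : ∀ i (hi : i ≤ n),
    X.d i ≫ (e (i + 1) (by omega)).hom = (e i (by omega)).hom ≫ Y.d i

/-- Degreewise direct sum of complexes. -/
noncomputable def biprodC [HasBinaryBiproducts C] (X Y : NComplex C n) : NComplex C n where
  X i := X.X i ⊞ Y.X i
  d i := biprod.map (X.d i) (Y.d i)
  dd i hi := by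
    ext <;> simp [X.dd i hi, Y.dd i hi]

/-- The complex `0 → ⋯ → 0 → Z →(𝟙) Z → 0 → ⋯ → 0` with `Z` placed in degrees `k` and
`k+1`. -/
noncomputable def splitCpx [HasZeroObject C] (Z : C) (k : ℕ) : NComplex C n where
  X j := if j = k ∨ j = k + 1 then Z else 0
  d j :=
    if h : j = k then
      eqToHom (by subst h; simp)
    else 0
  dd j hj := by
    by_cases h : j = k
    · simp [dif_neg (show ¬ j + 1 = k by omega)]
    · simp [dif_neg h]

/-- The zero complex. -/
noncomputable def zeroCpx [HasZeroObject C] : NComplex C n where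
  X _ := 0
  d _ := 0
  dd _ _ := by simp

/-- Image of a complex under an additive functor. -/
def mapCpx {D : Type u} [Category.{v} D] [Preadditive D] (F : C ⥤ D) [F.Additive]
    (X : NComplex C n) : NComplex D n where
  X i := F.obj (X.X i)
  d i := F.map (X.d i)
  dd i hi := by rw [← F.map_comp, X.dd i hi, F.map_zero]

section Exang

variable (C) (n)

/-- The underlying data of an `n`-exangulated category: an additive `Ab`-valued bifunctor `E`
and a class of distinguished `n`-exangles (a complex concentrated in degrees `0,…,n+1`
together with an `E`-extension attached to its end terms). -/
structure NExangData where
  E : Cᵒᵖ ⥤ C ⥤ AddCommGrpCat.{v}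
  Dist : ∀ X : NComplex C n, ((E.obj (op (X.X (n + 1)))).obj (X.X 0)) → Prop

variable {C n}

/-- Transport of an `E`-extension along equalities of its end objects. -/
def ETransport (E : Cᵒᵖ ⥤ C ⥤ AddCommGrpCat.{v}) {A A' B B' : C} (hA : A = A') (hB : B = B')
    (δ : (E.obj (op B)).obj A) : (E.obj (op B')).obj A' :=
  (E.map (eqToHom hB.symm).op).app A' (((E.obj (op B)).map (eqToHom hA)) δ)

/-- `f` is an `s`-inflation: it is the `0`-th differential of some distinguished `n`-exangle. -/
def NExangData.Inflation (S : NExangData C n) {A B : C} (f : A ⟶ B) : Prop :=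
  ∃ (X : NComplex C n) (δ : (S.E.obj (op (X.X (n + 1)))).obj (X.X 0))
    (h0 : X.X 0 = A) (h1 : X.X 1 = B),
      S.Dist X δ ∧ X.d 0 = eqToHom h0 ≫ f ≫ eqToHom h1.symm

/-- `f` is an `s`-deflation: it is the `n`-th differential of some distinguished `n`-exangle. -/
def NExangData.Deflation (S : NExangData C n) {A B : C} (f : A ⟶ B) : Prop :=
  ∃ (X : NComplex C n) (δ : (S.E.obj (op (X.X (n + 1)))).obj (X.X 0))
    (h0 : X.X n = A) (h1 : X.X (n + 1) = B),
      S.Dist X δ ∧ X.d n = eqToHom h0 ≫ f ≫ eqToHom h1.symm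

/-- `M` is (a choice of) the mapping cone of a morphism `f• : X• → Y•` with `f₀ = id`:
`M : X₁ → X₂ ⊕ Y₁ → ⋯ → X_{n+1} ⊕ Y_n → Y_{n+1}`, encoded via binary biproduct (bicone)
data in the middle degrees and the usual matrix differentials. -/
def IsMappingCone {X Y : NComplex C n} (φ : ChainMap X Y) (M : NComplex C n) : Prop :=
  ∃ (h0 : M.X 0 = X.X 1) (htop : M.X (n + 1) = Y.X (n + 1))
    (p : ∀ i, 1 ≤ i → i ≤ n → (M.X i ⟶ X.X (i + 1)))
    (q : ∀ i, 1 ≤ i → i ≤ n → (M.X i ⟶ Y.X i))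
    (ι₁ : ∀ i, 1 ≤ i → i ≤ n → (X.X (i + 1) ⟶ M.X i))
    (ι₂ : ∀ i, 1 ≤ i → i ≤ n → (Y.X i ⟶ M.X i)),
    (∀ i (h1 : 1 ≤ i) (h2 : i ≤ n),
      ι₁ i h1 h2 ≫ p i h1 h2 = 𝟙 _ ∧ ι₂ i h1 h2 ≫ q i h1 h2 = 𝟙 _ ∧
      ι₁ i h1 h2 ≫ q i h1 h2 = 0 ∧ ι₂ i h1 h2 ≫ p i h1 h2 = 0 ∧
      p i h1 h2 ≫ ι₁ i h1 h2 + q i h1 h2 ≫ ι₂ i h1 h2 = 𝟙 (M.X i)) ∧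
    (∀ hn : 1 ≤ n,
      M.d 0 ≫ p 1 le_rfl hn = eqToHom h0 ≫ (-(X.d 1)) ∧
      M.d 0 ≫ q 1 le_rfl hn = eqToHom h0 ≫ φ.f 1) ∧
    (∀ i (h1 : 1 ≤ i) (h2 : i + 1 ≤ n),
      M.d i = p i h1 (by omega) ≫ (-(X.d (i + 1))) ≫ ι₁ (i + 1) (by omega) h2 +
        p i h1 (by omega) ≫ φ.f (i + 1) ≫ ι₂ (i + 1) (by omega) h2 +
        q i h1 (by omega) ≫ Y.d i ≫ ι₂ (i + 1) (by omega) h2) ∧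
    (∀ hn : 1 ≤ n,
      M.d n = p n hn le_rfl ≫ φ.f (n + 1) ≫ eqToHom htop.symm +
        q n hn le_rfl ≫ Y.d n ≫ eqToHom htop.symm)

/-- `N` is (a choice of) the mapping cocone of a morphism `f• : X• → Y•` with `f_{n+1} = id`:
`N : X₀ → X₁ ⊕ Y₀ → ⋯ → X_n ⊕ Y_{n-1} → Y_n`, encoded via binary biproduct (bicone) data. -/
def IsMappingCocone {X Y : NComplex C n} (φ : ChainMap X Y) (N : NComplex C n) : Prop :=
  ∃ (h0 : N.X 0 = X.X 0) (htop : N.X (n + 1) = Y.X n)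
    (p : ∀ j, j + 1 ≤ n → (N.X (j + 1) ⟶ X.X (j + 1)))
    (q : ∀ j, j + 1 ≤ n → (N.X (j + 1) ⟶ Y.X j))
    (ι₁ : ∀ j, j + 1 ≤ n → (X.X (j + 1) ⟶ N.X (j + 1)))
    (ι₂ : ∀ j, j + 1 ≤ n → (Y.X j ⟶ N.X (j + 1))),
    (∀ j (hj : j + 1 ≤ n),
      ι₁ j hj ≫ p j hj = 𝟙 _ ∧ ι₂ j hj ≫ q j hj = 𝟙 _ ∧
      ι₁ j hj ≫ q j hj = 0 ∧ ι₂ j hj ≫ p j hj = 0 ∧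
      p j hj ≫ ι₁ j hj + q j hj ≫ ι₂ j hj = 𝟙 (N.X (j + 1))) ∧
    (∀ hn : 1 ≤ n,
      N.d 0 = eqToHom h0 ≫ ((-(X.d 0)) ≫ ι₁ 0 hn + φ.f 0 ≫ ι₂ 0 hn)) ∧
    (∀ j (hj : j + 2 ≤ n),
      N.d (j + 1) = p j (by omega) ≫ (-(X.d (j + 1))) ≫ ι₁ (j + 1) hj +
        p j (by omega) ≫ φ.f (j + 1) ≫ ι₂ (j + 1) hj +
        q j (by omega) ≫ Y.d j ≫ ι₂ (j + 1) hj) ∧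
    (∀ j (hj : j + 1 = n),
      N.d (j + 1) = p j (by omega) ≫ φ.f (j + 1) ≫ eqToHom (by rw [hj, htop]) +
        q j (by omega) ≫ Y.d j ≫ eqToHom (by rw [hj, htop]))

variable (C n)

/-- An `n`-exangulated category `(C, E, s)` in the sense of Herschend–Liu–Nakaoka, encoded by
its additive bifunctor `E`, the class `Dist` of (`s`-)distinguished `n`-exangles, and the
axioms: `E` is biadditive, distinguished `n`-exangles are `n`-exangles (R1), the realization
is defined on every extension (R0 existence of lifts, surjectivity of `s`, invariance under
homotopy equivalence with fixed ends), (R2), (EA1), (EA2) and (EA2ᵒᵖ). -/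
structure NExang [HasZeroObject C] extends NExangData C n where
  additive_snd : ∀ A : Cᵒᵖ, (E.obj A).Additive
  additive_fst : ∀ B : C, (E.flip.obj B).Additive
  -- (R1): distinguished n-exangles are n-exangles
  ex_contra_mid : ∀ X δ, Dist X δ → ∀ i, i + 1 ≤ n → ∀ (W : C) (h : W ⟶ X.X (i + 1)),
    h ≫ X.d (i + 1) = 0 → ∃ g : W ⟶ X.X i, g ≫ X.d i = h
  ex_contra_top : ∀ X δ, Dist X δ → ∀ (W : C) (h : W ⟶ X.X (n + 1)),
    (E.map h.op).app (X.X 0) δ = 0 → ∃ g : W ⟶ X.X n, g ≫ X.d n = h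
  ex_co_mid : ∀ X δ, Dist X δ → ∀ i, i + 1 ≤ n → ∀ (W : C) (h : X.X (i + 1) ⟶ W),
    X.d i ≫ h = 0 → ∃ g : X.X (i + 2) ⟶ W, X.d (i + 1) ≫ g = h
  ex_co_bot : ∀ X δ, Dist X δ → ∀ (W : C) (h : X.X 0 ⟶ W),
    ((E.obj (op (X.X (n + 1)))).map h) δ = 0 → ∃ g : X.X 1 ⟶ W, X.d 0 ≫ g = h
  attached_push : ∀ X δ, Dist X δ → ((E.obj (op (X.X (n + 1)))).map (X.d 0)) δ = 0
  attached_pull : ∀ X δ, Dist X δ → (E.map (X.d n).op).app (X.X 0) δ = 0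
  -- (R0): lifts of morphisms of extensions
  lift : ∀ X Y δ ρ, Dist X δ → Dist Y ρ →
    ∀ (a : X.X 0 ⟶ Y.X 0) (c : X.X (n + 1) ⟶ Y.X (n + 1)),
      ((E.obj (op (X.X (n + 1)))).map a) δ = (E.map c.op).app (Y.X 0) ρ →
      ∃ φ : ChainMap X Y, φ.f 0 = a ∧ φ.f (n + 1) = c
  -- `s` realizes every extension
  realize : ∀ (A B : C) (δ : (E.obj (op B)).obj A),
    ∃ (X : NComplex C n) (h0 : X.X 0 = A) (h1 : X.X (n + 1) = B),
      Dist X (ETransport E h0.symm h1.symm δ)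
  -- `s(δ)` is a single homotopy class with fixed ends…
  unique : ∀ X Y δ (h0 : X.X 0 = Y.X 0) (h1 : X.X (n + 1) = Y.X (n + 1)),
    Dist X δ → Dist Y (ETransport E h0 h1 δ) → FixedHtpyEquiv X Y h0 h1
  -- …and is closed under homotopy equivalences with fixed ends
  closedHtpy : ∀ X Y δ (h0 : X.X 0 = Y.X 0) (h1 : X.X (n + 1) = Y.X (n + 1)),
    Dist X δ → FixedHtpyEquiv X Y h0 h1 → Dist Y (ETransport E h0 h1 δ)
  -- (R2)
  realize_zero₁ : ∀ A : C, Dist (splitCpx A 0) 0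
  realize_zero₂ : ∀ A : C, Dist (splitCpx A n) 0
  -- (EA1)
  ea1_infl : ∀ {A B Z : C} (f : A ⟶ B) (g : B ⟶ Z),
    toNExangData.Inflation f → toNExangData.Inflation g → toNExangData.Inflation (f ≫ g)
  ea1_defl : ∀ {A B Z : C} (f : A ⟶ B) (g : B ⟶ Z),
    toNExangData.Deflation f → toNExangData.Deflation g → toNExangData.Deflation (f ≫ g)
  -- (EA2): good lifts of (𝟙, c) exist, with distinguished mapping cone
  ea2 : ∀ {A D Co : C} (ρ : (E.obj (op D)).obj A) (c : Co ⟶ D) (X Y : NComplex C n)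
    (hX0 : X.X 0 = A) (hXn : X.X (n + 1) = Co) (hY0 : Y.X 0 = A) (hYn : Y.X (n + 1) = D),
    Dist X (ETransport E hX0.symm hXn.symm ((E.map c.op).app A ρ)) →
    Dist Y (ETransport E hY0.symm hYn.symm ρ) →
    ∃ φ : ChainMap X Y, φ.f 0 = eqToHom (hX0.trans hY0.symm) ∧
      φ.f (n + 1) = eqToHom hXn ≫ c ≫ eqToHom hYn.symm ∧
      ∃ M : NComplex C n, IsMappingCone φ M ∧
        ∃ (hM0 : M.X 0 = X.X 1) (hMn : M.X (n + 1) = Y.X (n + 1)),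
          Dist M (ETransport E hM0.symm (hMn.trans hYn).symm
            (((E.obj (op D)).map (eqToHom hX0.symm ≫ X.d 0)) ρ))
  -- (EA2ᵒᵖ): good lifts of (a, 𝟙) exist, with distinguished mapping cocone
  ea2op : ∀ {A B D : C} (ρ : (E.obj (op D)).obj A) (a : A ⟶ B) (X Y : NComplex C n)
    (hX0 : X.X 0 = A) (hXn : X.X (n + 1) = D) (hY0 : Y.X 0 = B) (hYn : Y.X (n + 1) = D),
    Dist X (ETransport E hX0.symm hXn.symm ρ) →
    Dist Y (ETransport E hY0.symm hYn.symm (((E.obj (op D)).map a) ρ)) →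
    ∃ φ : ChainMap X Y, φ.f 0 = eqToHom hX0 ≫ a ≫ eqToHom hY0.symm ∧
      φ.f (n + 1) = eqToHom (hXn.trans hYn.symm) ∧
      ∃ N : NComplex C n, IsMappingCocone φ N ∧
        ∃ (hN0 : N.X 0 = X.X 0) (hNn : N.X (n + 1) = Y.X n),
          Dist N (ETransport E (hN0.trans hX0).symm hNn.symm
            ((E.map (Y.d n ≫ eqToHom hYn).op).app A ρ))

end Exang

section Sub

variable {C : Type u} [Category.{v} C] [Preadditive C] {n : ℕ}

/-- The subcategory determined by `𝒜 ⊆ C` is closed under isomorphisms, finite direct sums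
and direct summands. -/
def GoodSubcat [HasBinaryBiproducts C] (𝒜 : Set C) : Prop :=
  (∀ (A B : C), A ∈ 𝒜 → (A ≅ B) → B ∈ 𝒜) ∧
  (∀ (A B : C), A ∈ 𝒜 → B ∈ 𝒜 → (A ⊞ B) ∈ 𝒜) ∧
  (∀ (A B : C) (r : A ⟶ B) (s : B ⟶ A), r ≫ s = 𝟙 A → B ∈ 𝒜 → A ∈ 𝒜)

/-- `𝒜` is an `n`-extension closed subcategory of `(C, E, s)`: every `E`-extension between
objects of `𝒜` is realized by a distinguished `n`-exangle whose terms in degrees `1,…,n`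
belong to `𝒜`. -/
def NExtClosed (S : NExangData C n) (𝒜 : Set C) : Prop :=
  ∀ (A B : C), A ∈ 𝒜 → B ∈ 𝒜 → ∀ δ : (S.E.obj (op B)).obj A,
    ∃ (X : NComplex C n) (h0 : X.X 0 = A) (h1 : X.X (n + 1) = B),
      S.Dist X (ETransport S.E h0.symm h1.symm δ) ∧ ∀ i, 1 ≤ i → i ≤ n → X.X i ∈ 𝒜

/-- `f` is a `t`-inflation for the structure inherited by the `n`-extension closed
subcategory `𝒜`: it is the `0`-th differential of a distinguished `n`-exangle of `C` all of
whose terms in degrees `1,…,n+1` lie in `𝒜`. -/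
def TInfl (S : NExangData C n) (𝒜 : Set C) {A B : C} (f : A ⟶ B) : Prop :=
  ∃ (X : NComplex C n) (δ : (S.E.obj (op (X.X (n + 1)))).obj (X.X 0))
    (h0 : X.X 0 = A) (h1 : X.X 1 = B),
      S.Dist X δ ∧ (∀ i, 1 ≤ i → i ≤ n + 1 → X.X i ∈ 𝒜) ∧
      X.d 0 = eqToHom h0 ≫ f ≫ eqToHom h1.symm

/-- `P` is a projective object of the `n`-exangulated category. -/
def IsProj (S : NExangData C n) (P : C) : Prop :=
  ∀ X δ, S.Dist X δ → ∀ c : P ⟶ X.X (n + 1), ∃ b : P ⟶ X.X n, b ≫ X.d n = c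

/-- `I` is an injective object of the `n`-exangulated category. -/
def IsInj (S : NExangData C n) (I : C) : Prop :=
  ∀ X δ, S.Dist X δ → ∀ c : X.X 0 ⟶ I, ∃ b : X.X 1 ⟶ I, X.d 0 ≫ b = c

/-- The `n`-exangulated category has enough projectives. -/
def EnoughProj (S : NExangData C n) : Prop :=
  ∀ Z : C, ∃ (X : NComplex C n) (δ : (S.E.obj (op (X.X (n + 1)))).obj (X.X 0)),
    X.X (n + 1) = Z ∧ S.Dist X δ ∧ ∀ i, 1 ≤ i → i ≤ n → IsProj S (X.X i)

/-- The `n`-exangulated category has enough injectives. -/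
def EnoughInj (S : NExangData C n) : Prop :=
  ∀ Z : C, ∃ (X : NComplex C n) (δ : (S.E.obj (op (X.X (n + 1)))).obj (X.X 0)),
    X.X 0 = Z ∧ S.Dist X δ ∧ ∀ i, 1 ≤ i → i ≤ n → IsInj S (X.X i)

/-- `Ω𝒜 = CoCone(𝒫, 𝒜)`: objects `B` admitting a distinguished `n`-exangle
`B → P₁ → ⋯ → P_n → A'` with all `P_i` projective and `A' ∈ 𝒜`. -/
def OmegaSet (S : NExangData C n) (𝒜 : Set C) : Set C :=
  {B | ∃ (X : NComplex C n) (δ : (S.E.obj (op (X.X (n + 1)))).obj (X.X 0)),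
    X.X 0 = B ∧ S.Dist X δ ∧ (∀ i, 1 ≤ i → i ≤ n → IsProj S (X.X i)) ∧ X.X (n + 1) ∈ 𝒜}

/-- `Σ𝒜 = Cone(𝒜, ℐ)`: objects `Z` admitting a distinguished `n`-exangle
`A' → I₁ → ⋯ → I_n → Z` with all `I_i` injective and `A' ∈ 𝒜`. -/
def SigmaSet (S : NExangData C n) (𝒜 : Set C) : Set C :=
  {Z | ∃ (X : NComplex C n) (δ : (S.E.obj (op (X.X (n + 1)))).obj (X.X 0)),
    X.X (n + 1) = Z ∧ S.Dist X δ ∧ (∀ i, 1 ≤ i → i ≤ n → IsInj S (X.X i)) ∧ X.X 0 ∈ 𝒜}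

end Sub

section NExact

variable {C : Type u} [Category.{v} C] [Preadditive C] {n : ℕ}

/-- A complex concentrated in degrees `0,…,n+1` is an `n`-exact sequence: for every object
`W` the induced sequences `0 → Hom(W,X₀) → ⋯ → Hom(W,X_{n+1})` and
`0 → Hom(X_{n+1},W) → ⋯ → Hom(X₀,W)` are exact. -/
structure IsNExactSeq (X : NComplex C n) : Prop where
  mono : ∀ (W : C) (h : W ⟶ X.X 0), h ≫ X.d 0 = 0 → h = 0
  epi : ∀ (W : C) (h : X.X (n + 1) ⟶ W), X.d n ≫ h = 0 → h = 0
  ex_contra : ∀ i, i + 1 ≤ n → ∀ (W : C) (h : W ⟶ X.X (i + 1)),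
    h ≫ X.d (i + 1) = 0 → ∃ g : W ⟶ X.X i, g ≫ X.d i = h
  ex_co : ∀ i, i + 1 ≤ n → ∀ (W : C) (h : X.X (i + 1) ⟶ W),
    X.d i ≫ h = 0 → ∃ g : X.X (i + 2) ⟶ W, X.d (i + 1) ≫ g = h

/-- A weak isomorphism of `n`-exact sequences: a morphism `f•` such that `f_i` and `f_{i+1}`
are isomorphisms for some `0 ≤ i ≤ n+1` (with `f_{n+2} := f₀`). -/
def IsWeakIso {X Y : NComplex C n} (φ : ChainMap X Y) : Prop :=
  (∃ i, i ≤ n ∧ IsIso (φ.f i) ∧ IsIso (φ.f (i + 1))) ∨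
  (IsIso (φ.f (n + 1)) ∧ IsIso (φ.f 0))

/-- `f• : X• → Y•` (with `f_{n+1}` an identification of the top terms) is an `n`-pushout
diagram of the bottom part `X₀ → ⋯ → X_n` along `f₀`: the mapping-cone complex
`X₀ → X₁ ⊕ Y₀ → ⋯ → X_n ⊕ Y_{n-1} → Y_n` is right exact, written out componentwise. -/
structure IsNPushout {X Y : NComplex C n} (φ : ChainMap X Y) : Prop where
  inj : ∀ k, k + 1 = n → ∀ (W : C) (h : Y.X (k + 1) ⟶ W),
    φ.f (k + 1) ≫ h = 0 → Y.d k ≫ h = 0 → h = 0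
  ex1 : 2 ≤ n → ∀ (W : C) (u : X.X 1 ⟶ W) (v : Y.X 0 ⟶ W),
    φ.f 0 ≫ v = X.d 0 ≫ u →
    ∃ (u' : X.X 2 ⟶ W) (v' : Y.X 1 ⟶ W),
      u = φ.f 1 ≫ v' - X.d 1 ≫ u' ∧ v = Y.d 0 ≫ v'
  exMid : ∀ k, k + 3 ≤ n → ∀ (W : C) (u : X.X (k + 2) ⟶ W) (v : Y.X (k + 1) ⟶ W),
    φ.f (k + 1) ≫ v = X.d (k + 1) ≫ u → Y.d k ≫ v = 0 →
    ∃ (u' : X.X (k + 3) ⟶ W) (v' : Y.X (k + 2) ⟶ W),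
      u = φ.f (k + 2) ≫ v' - X.d (k + 2) ≫ u' ∧ v = Y.d (k + 1) ≫ v'
  exTop : ∀ k, k + 2 = n → ∀ (W : C) (u : X.X (k + 2) ⟶ W) (v : Y.X (k + 1) ⟶ W),
    φ.f (k + 1) ≫ v = X.d (k + 1) ≫ u → Y.d k ≫ v = 0 →
    ∃ h : Y.X (k + 2) ⟶ W, u = φ.f (k + 2) ≫ h ∧ v = Y.d (k + 1) ≫ h
  exTop1 : 1 = n → ∀ (W : C) (u : X.X 1 ⟶ W) (v : Y.X 0 ⟶ W),
    φ.f 0 ≫ v = X.d 0 ≫ u →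
    ∃ h : Y.X 1 ⟶ W, u = φ.f 1 ≫ h ∧ v = Y.d 0 ≫ h

/-- `f• : X• → Y•` (with `f₀` an identification of the bottom terms) is an `n`-pullback
diagram of the top part `Y₁ → ⋯ → Y_{n+1}` along `f_{n+1}`: the complex
`X₁ → X₂ ⊕ Y₁ → ⋯ → X_{n+1} ⊕ Y_n → Y_{n+1}` is left exact, written out componentwise. -/
structure IsNPullback {X Y : NComplex C n} (φ : ChainMap X Y) : Prop where
  inj : ∀ (W : C) (h : W ⟶ X.X 1), h ≫ X.d 1 = 0 → h ≫ φ.f 1 = 0 → h = 0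
  ex1 : 2 ≤ n → ∀ (W : C) (u : W ⟶ X.X 2) (v : W ⟶ Y.X 1),
    u ≫ X.d 2 = 0 → u ≫ φ.f 2 + v ≫ Y.d 1 = 0 →
    ∃ w : W ⟶ X.X 1, u = -(w ≫ X.d 1) ∧ v = w ≫ φ.f 1
  exMid : ∀ k, k + 3 ≤ n → ∀ (W : C) (u : W ⟶ X.X (k + 3)) (v : W ⟶ Y.X (k + 2)),
    u ≫ X.d (k + 3) = 0 → u ≫ φ.f (k + 3) + v ≫ Y.d (k + 2) = 0 →
    ∃ (u₀ : W ⟶ X.X (k + 2)) (v₀ : W ⟶ Y.X (k + 1)),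
      u = -(u₀ ≫ X.d (k + 2)) ∧ v = u₀ ≫ φ.f (k + 2) + v₀ ≫ Y.d (k + 1)
  exTop : ∀ k, k + 2 = n → ∀ (W : C) (u : W ⟶ X.X (k + 3)) (v : W ⟶ Y.X (k + 2)),
    u ≫ φ.f (k + 3) + v ≫ Y.d (k + 2) = 0 →
    ∃ (u₀ : W ⟶ X.X (k + 2)) (v₀ : W ⟶ Y.X (k + 1)),
      u = -(u₀ ≫ X.d (k + 2)) ∧ v = u₀ ≫ φ.f (k + 2) + v₀ ≫ Y.d (k + 1)
  exTop1 : 1 = n → ∀ (W : C) (u : W ⟶ X.X 2) (v : W ⟶ Y.X 1),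
    u ≫ φ.f 2 + v ≫ Y.d 1 = 0 →
    ∃ w : W ⟶ X.X 1, u = -(w ≫ X.d 1) ∧ v = w ≫ φ.f 1

variable (C n)

/-- An `n`-exact category in the sense of Jasso: an additive category together with a class
of `n`-exact sequences (the admissible ones, or conflations), closed under weak
isomorphisms, containing the trivial sequences and satisfying the axioms (E1), (E1ᵒᵖ),
(E2) (existence of `n`-pushouts of conflations along morphisms from the first term) and
(E2ᵒᵖ). -/
structure NExactCategory [HasZeroObject C] where
  conflation : NComplex C n → Prop
  nexact : ∀ X, conflation X → IsNExactSeq X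
  closed_weakIso₁ : ∀ (X Y : NComplex C n) (φ : ChainMap X Y),
    conflation X → IsNExactSeq Y → IsWeakIso φ → conflation Y
  closed_weakIso₂ : ∀ (X Y : NComplex C n) (φ : ChainMap X Y),
    conflation Y → IsNExactSeq X → IsWeakIso φ → conflation X
  e0 : ∀ A : C, conflation (splitCpx A 0)
  e0' : ∀ A : C, conflation (splitCpx A n)
  e1 : ∀ {A B Z : C} (f : A ⟶ B) (g : B ⟶ Z),
    (∃ (X : NComplex C n) (h0 : X.X 0 = A) (h1 : X.X 1 = B), conflation X ∧
        X.d 0 = eqToHom h0 ≫ f ≫ eqToHom h1.symm) →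
    (∃ (X : NComplex C n) (h0 : X.X 0 = B) (h1 : X.X 1 = Z), conflation X ∧
        X.d 0 = eqToHom h0 ≫ g ≫ eqToHom h1.symm) →
    (∃ (X : NComplex C n) (h0 : X.X 0 = A) (h1 : X.X 1 = Z), conflation X ∧
        X.d 0 = eqToHom h0 ≫ (f ≫ g) ≫ eqToHom h1.symm)
  e1op : ∀ {A B Z : C} (f : A ⟶ B) (g : B ⟶ Z),
    (∃ (X : NComplex C n) (h0 : X.X n = A) (h1 : X.X (n + 1) = B), conflation X ∧
        X.d n = eqToHom h0 ≫ f ≫ eqToHom h1.symm) →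
    (∃ (X : NComplex C n) (h0 : X.X n = B) (h1 : X.X (n + 1) = Z), conflation X ∧
        X.d n = eqToHom h0 ≫ g ≫ eqToHom h1.symm) →
    (∃ (X : NComplex C n) (h0 : X.X n = A) (h1 : X.X (n + 1) = Z), conflation X ∧
        X.d n = eqToHom h0 ≫ (f ≫ g) ≫ eqToHom h1.symm)
  e2 : ∀ X, conflation X → ∀ (B : C) (g : X.X 0 ⟶ B),
    ∃ (Y : NComplex C n) (φ : ChainMap X Y) (h0 : Y.X 0 = B)
      (htop : X.X (n + 1) = Y.X (n + 1)),
      φ.f 0 = g ≫ eqToHom h0.symm ∧ φ.f (n + 1) = eqToHom htop ∧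
      IsNPushout φ ∧ conflation Y
  e2op : ∀ Y, conflation Y → ∀ (B : C) (g : B ⟶ Y.X (n + 1)),
    ∃ (X : NComplex C n) (φ : ChainMap X Y) (htop : X.X (n + 1) = B)
      (h0 : X.X 0 = Y.X 0),
      φ.f (n + 1) = eqToHom htop ≫ g ∧ φ.f 0 = eqToHom h0 ∧
      IsNPullback φ ∧ conflation X

end NExact


/-- A distinguished `n`-exangle is minimal if all its inner differentials
`X₁ → X₂, …, X_{n-1} → X_n` lie in the Jacobson radical of `C`. -/
def MinimalCpx {C : Type u} [Category.{v} C] [Preadditive C] {n : ℕ} (X : NComplex C n) :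
    Prop :=
  ∀ i, 1 ≤ i → i + 1 ≤ n → InRad (X.d i)

/-- Direct sum of a finite list of split complexes `split_{p.2}(p.1)`. -/
noncomputable def sumSplitCpx {C : Type u} [Category.{v} C] [Preadditive C] [HasZeroObject C]
    [HasBinaryBiproducts C] {n : ℕ} (L : List (C × ℕ)) : NComplex C n :=
  L.foldr (fun p acc => biprodC (splitCpx p.1 p.2) acc) zeroCpx

/-- first step of Lemma 3.12.  If a distinguished `n`-exangle has `0`-th
differential `[f₀; g₀] : A₀ ⟶ A₁ ⊕ B₁` with `g₀ = 0`, then the component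
`g₁ : B₁ ⟶ A₂` of the next differential is a split monomorphism (a section). -/
theorem stmt10 {C : Type u} [Category.{v} C] [Preadditive C] [HasZeroObject C]
    [HasFiniteBiproducts C] {n : ℕ} (hn : 0 < n) (S : NExang C n)
    (A₁ B₁ : C) (X : NComplex C n) (δ : (S.E.obj (op (X.X (n + 1)))).obj (X.X 0))
    (hX : S.Dist X δ) (h1 : X.X 1 = (A₁ ⊞ B₁))
    (hg0 : X.d 0 ≫ eqToHom h1 ≫ biprod.snd = 0) :
    ∃ r : X.X 2 ⟶ B₁, (biprod.inr ≫ eqToHom h1.symm ≫ X.d 1) ≫ r = 𝟙 B₁ := by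
  -- The projection onto `B₁` kills `d₀`, so by (R1) it factors through `d₁`.
  obtain ⟨r, hr⟩ := S.ex_co_mid X δ hX 0 hn B₁ (eqToHom h1 ≫ biprod.snd) hg0
  exact ⟨r, by simp [hr]⟩

end NExangPaper
end

section
/- Let (C,E,s) be a Krull–Schmidt n-exangulated category with enough projectives, and let A be an n-extension closed full subcategory with Hom_C(A, ΩA) = 0, where ΩA consists of objects B admitting a distinguished n-exangle B → P₁ → ⋯ → P_n → C' with all P_i projective and C' ∈ A. Then every t-inflation in A is a monomorphism in A; that is, if f : A → B occurs as the 0-th differential of a distinguished n-exangle A → B → C₂ → ⋯ → C_{n+1} with C₂,…,C_{n+1} ∈ A, and h : C → A is a morphism in A with f ∘ h = 0, then h = 0. -/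
open CategoryTheory CategoryTheory.Limits Opposite ZeroObject

universe v u

namespace NExangPaper

attribute [local instance] CategoryTheory.Limits.hasBinaryBiproducts_of_finite_biproducts


variable {C : Type u} [Category.{v} C] [Preadditive C]

variable {n : ℕ}

/-! Let `A → B → X₂ → ⋯ → X_{n+1}` be the exangle of the `t`-inflation, with extension `δ`, and
`Y₀ → P₁ → ⋯ → P_n → X_{n+1}` a projective resolution, with extension `δ_Ω`, so that `Y₀ ∈ Ω𝒜`.
Realize `ξ = (δ_Ω, δ) ∈ E(X_{n+1}, Y₀ ⊕ A)` by an exangle `G`. By (EA2ᵒᵖ) the two projections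
lift to morphisms `G → X` and `G → Y` with distinguished mapping cocones. The cocone of `G → Y`
carries an extension pulled back to the projective `P_n`, hence zero, so its first differential
`(-d₀ᴳ, φ₀)` is a split monomorphism. Given `h : W → A` with `h f = 0`, exactness of the cocone of
`G → X` lifts `h` to `g : W → G₀` with `g d₀ᴳ = 0`; since `Hom(𝒜, Ω𝒜) = 0` also `g φ₀ = 0`,
so `g = 0` and therefore `h = 0`. -/

section ExtensionCalculus

variable {C : Type u} [Category.{v} C] (E : Cᵒᵖ ⥤ C ⥤ AddCommGrpCat.{v})

theorem ETransport_self {A B : C} (hA : A = A) (hB : B = B) (δ : (E.obj (op B)).obj A) :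
    ETransport E hA hB δ = δ := by
  simp [ETransport]

theorem ETransport_ETransport {A A' A'' B B' B'' : C} (hA : A = A') (hA' : A' = A'')
    (hB : B = B') (hB' : B' = B'') (δ : (E.obj (op B)).obj A) :
    ETransport E hA' hB' (ETransport E hA hB δ) = ETransport E (hA.trans hA') (hB.trans hB') δ := by
  subst hA hA' hB hB'
  simp only [ETransport_self]

theorem ETransport_zero {A A' B B' : C} (hA : A = A') (hB : B = B') :
    ETransport E hA hB (0 : (E.obj (op B)).obj A) = 0 := by
  subst hA hB
  exact ETransport_self E rfl rfl 0

theorem map_op_comp_app {B₁ B₂ B₃ A : C} (u : B₃ ⟶ B₂) (v : B₂ ⟶ B₁) (x : (E.obj (op B₁)).obj A) :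
    (E.map (u ≫ v).op).app A x = (E.map u.op).app A ((E.map v.op).app A x) := by
  simp

end ExtensionCalculus

section Biproduct

variable {C : Type u} [Category.{v} C] [Preadditive C] [HasBinaryBiproducts C]
  (F : C ⥤ AddCommGrpCat.{v}) [F.Additive] {A₁ A₂ : C} (x : F.obj A₁) (y : F.obj A₂)

theorem map_fst_map_inl_add_map_inr :
    F.map biprod.fst (F.map biprod.inl x + F.map biprod.inr y) = x := by
  simp [← ConcreteCategory.comp_apply, ← F.map_comp]

theorem map_snd_map_inl_add_map_inr :
    F.map biprod.snd (F.map biprod.inl x + F.map biprod.inr y) = y := by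
  simp [← ConcreteCategory.comp_apply, ← F.map_comp]

end Biproduct

section NExang

variable {C : Type u} [Category.{v} C] [Preadditive C] [HasZeroObject C] {n : ℕ}
  (S : NExang C n)

theorem NExang.extension_eq_zero_of_isProj {P V : C} (hP : IsProj S.toNExangData P)
    (μ : (S.E.obj (op P)).obj V) : μ = 0 := by
  obtain ⟨R, rfl, rfl, hR⟩ := S.realize V P μ
  rw [ETransport_self] at hR
  obtain ⟨b, hb⟩ := hP R μ hR (𝟙 _)
  calc μ = (S.E.map (b ≫ R.d n).op).app _ μ := by simp [hb]
    _ = 0 := by rw [map_op_comp_app, S.attached_pull R μ hR, map_zero]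

theorem NExang.exists_retraction_of_dist_zero {X : NComplex C n} (hX : S.Dist X 0) :
    ∃ r, X.d 0 ≫ r = 𝟙 _ :=
  S.ex_co_bot X 0 hX _ (𝟙 _) (map_zero _)

end NExang

namespace IsMappingCocone

variable {C : Type u} [Category.{v} C] [Preadditive C] {n : ℕ} {X Y N : NComplex C n}
  {φ : ChainMap X Y}

theorem eq_zero_of_retraction (hN : IsMappingCocone φ N) (hn : 1 ≤ n) {r : N.X 1 ⟶ N.X 0}
    (hr : N.d 0 ≫ r = 𝟙 _) {W : C} {g : W ⟶ X.X 0} (hgd : g ≫ X.d 0 = 0)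
    (hgf : g ≫ φ.f 0 = 0) : g = 0 := by
  obtain ⟨h0, -, -, -, _, _, -, hd0, -⟩ := hN
  calc g = g ≫ eqToHom h0.symm ≫ N.d 0 ≫ r ≫ eqToHom h0 := by simp [reassoc_of% hr]
    _ = 0 := by simp [hd0 hn, reassoc_of% hgd, reassoc_of% hgf]

theorem exists_lift [HasZeroObject C] (hN : IsMappingCocone φ N) (hn : 1 ≤ n) (S : NExang C n)
    {ν : (S.E.obj (op (N.X (n + 1)))).obj (N.X 0)} (hNd : S.Dist N ν) {W : C} {y : W ⟶ Y.X 0}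
    (hy : y ≫ Y.d 0 = 0) : ∃ g : W ⟶ X.X 0, g ≫ X.d 0 = 0 ∧ g ≫ φ.f 0 = y := by
  obtain ⟨h0, htop, p, q, ι₁, ι₂, hbicone, hd0, hdmid, hdtop⟩ := hN
  obtain ⟨hι₁p, hι₂q, hι₁q, hι₂p, -⟩ := hbicone 0 hn
  have hu : (y ≫ ι₂ 0 hn) ≫ N.d 1 = 0 := by
    rcases Nat.lt_or_ge 1 n with hn2 | hn1
    · rw [hdmid 0 hn2]
      simp [reassoc_of% hι₂p, reassoc_of% hι₂q, reassoc_of% hy]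
    · rw [hdtop 0 (by omega)]
      simp [reassoc_of% hι₂p, reassoc_of% hι₂q, reassoc_of% hy]
  obtain ⟨e, he⟩ := S.ex_contra_mid N ν hNd 0 hn W _ hu
  refine ⟨e ≫ eqToHom h0, ?_, ?_⟩
  · have := congrArg (· ≫ p 0 hn) he
    simpa [hd0 hn, hι₁p, hι₂p] using this
  · have := congrArg (· ≫ q 0 hn) he
    simpa [hd0 hn, hι₁q, hι₂q] using this

end IsMappingCocone

theorem stmt11_general {C : Type u} [Category.{v} C] [Preadditive C] [HasZeroObject C]
    [HasFiniteBiproducts C] {n : ℕ} (hn : 0 < n) (S : NExang C n)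
    (𝒜 : Set C)
    (hproj : EnoughProj S.toNExangData)
    (hvan : ∀ A' ∈ 𝒜, ∀ B ∈ OmegaSet S.toNExangData 𝒜, ∀ φ : A' ⟶ B, φ = 0)
    {A B : C} (f : A ⟶ B) (hf : TInfl S.toNExangData 𝒜 f) :
    ∀ W ∈ 𝒜, ∀ h : W ⟶ A, h ≫ f = 0 → h = 0 := by
  intro W hW h hhf
  obtain ⟨X, δ, rfl, rfl, hX, hX𝒜, hd0⟩ := hf
  replace hhf : h ≫ X.d 0 = 0 := by simpa [hd0] using hhf
  obtain ⟨Y, δY, hYtop, hY, hYproj⟩ := hproj (X.X (n + 1))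
  have hΩ : Y.X 0 ∈ OmegaSet S.toNExangData 𝒜 :=
    ⟨Y, δY, rfl, hY, hYproj, hYtop ▸ hX𝒜 (n + 1) (by omega) le_rfl⟩
  let F := S.E.obj (op (X.X (n + 1)))
  have : F.Additive := S.additive_snd _
  let ξ := F.map biprod.inl (ETransport S.E rfl hYtop δY) + F.map biprod.inr δ
  obtain ⟨G, hG0, hGn, hG⟩ := S.realize _ _ ξ
  obtain ⟨φX, -, -, N, hN, _, _, hNX⟩ := S.ea2op ξ biprod.snd G X hG0 hGn rfl rfl hG
    (by rwa [map_snd_map_inl_add_map_inr, ETransport_self])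
  obtain ⟨φY, -, -, NY, hNY, _, _, hNY0⟩ := S.ea2op ξ biprod.fst G Y hG0 hGn rfl hYtop hG
    (by rwa [map_fst_map_inl_add_map_inr, ETransport_ETransport, ETransport_self])
  rw [S.extension_eq_zero_of_isProj (hYproj n hn le_rfl)
    ((S.E.map (Y.d n ≫ eqToHom hYtop).op).app _ ξ), ETransport_zero] at hNY0
  obtain ⟨r, hr⟩ := S.exists_retraction_of_dist_zero hNY0
  obtain ⟨g, hgd, rfl⟩ := hN.exists_lift hn S hNX hhf
  rw [hNY.eq_zero_of_retraction hn hr hgd (hvan W hW _ hΩ _), zero_comp]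

/-- Step 1 of Theorem 3.16.  Let `(C,E,s)` be a Krull–Schmidt
`n`-exangulated category with enough projectives and `𝒜` an `n`-extension closed
subcategory with `Hom_C(𝒜, Ω𝒜) = 0`.  Then every `t`-inflation is a monomorphism in `𝒜`. -/
theorem stmt11 {C : Type u} [Category.{v} C] [Preadditive C] [HasZeroObject C]
    [HasFiniteBiproducts C] {n : ℕ} (hn : 0 < n) (S : NExang C n)
    (hKS : IsKrullSchmidt C) (𝒜 : Set C) (hgood : GoodSubcat 𝒜)
    (hext : NExtClosed S.toNExangData 𝒜)
    (hproj : EnoughProj S.toNExangData)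
    (hvan : ∀ A' ∈ 𝒜, ∀ B ∈ OmegaSet S.toNExangData 𝒜, ∀ φ : A' ⟶ B, φ = 0)
    {A B : C} (hA : A ∈ 𝒜) (hB : B ∈ 𝒜) (f : A ⟶ B) (hf : TInfl S.toNExangData 𝒜 f) :
    ∀ W ∈ 𝒜, ∀ h : W ⟶ A, h ≫ f = 0 → h = 0 :=
  stmt11_general hn S 𝒜 hproj hvan f hf

end NExangPaper
end

section
/- Let T be a Krull–Schmidt triangulated category and A a full subcategory closed under isomorphisms, direct sums, direct summands, and extensions (for every distinguished triangle X → Y → Z → X[1] with X, Z ∈ A, some choice of Y lies in A). If Hom_T(A[1], A) = 0, then A carries the structure of a Quillen exact category, whose conflations are the sequences X → Y → Z in A that fit into a distinguished triangle X → Y → Z → X[1] of T. -/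
open CategoryTheory CategoryTheory.Limits CategoryTheory.Pretriangulated Opposite ZeroObject

universe v u

namespace NExangPaper

attribute [local instance] CategoryTheory.Limits.hasBinaryBiproducts_of_finite_biproducts

variable {C : Type u} [Category.{v} C] [Preadditive C]

variable (C) in
/-- A Quillen exact category: an additive category together with a distinguished class of
kernel–cokernel pairs (the conflations), closed under isomorphism, such that identities are
inflations and deflations, inflations and deflations are closed under composition, pushouts
of inflations along arbitrary morphisms exist and are inflations, and dually for
deflations. -/
structure QuillenExactCategory where
  conflation : ∀ ⦃A B Z : C⦄, (A ⟶ B) → (B ⟶ Z) → Prop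
  comp_zero : ∀ {A B Z : C} {f : A ⟶ B} {g : B ⟶ Z}, conflation f g → f ≫ g = 0
  ker : ∀ {A B Z : C} {f : A ⟶ B} {g : B ⟶ Z}, conflation f g →
    ∀ (W : C) (h : W ⟶ B), h ≫ g = 0 → ∃! k : W ⟶ A, k ≫ f = h
  cok : ∀ {A B Z : C} {f : A ⟶ B} {g : B ⟶ Z}, conflation f g →
    ∀ (W : C) (h : B ⟶ W), f ≫ h = 0 → ∃! k : Z ⟶ W, g ≫ k = h
  iso_closed : ∀ {A B Z A' B' Z' : C} {f : A ⟶ B} {g : B ⟶ Z}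
    (eA : A ≅ A') (eB : B ≅ B') (eZ : Z ≅ Z') (f' : A' ⟶ B') (g' : B' ⟶ Z'),
    conflation f g → f ≫ eB.hom = eA.hom ≫ f' → g ≫ eZ.hom = eB.hom ≫ g' →
    conflation f' g'
  id_infl : ∀ A : C, ∃ (Z : C) (g : A ⟶ Z), conflation (𝟙 A) g
  id_defl : ∀ A : C, ∃ (W : C) (f : W ⟶ A), conflation f (𝟙 A)
  infl_comp : ∀ {A B Z : C} (f : A ⟶ B) (f' : B ⟶ Z),
    (∃ (W : C) (g : B ⟶ W), conflation f g) → (∃ (W : C) (g : Z ⟶ W), conflation f' g) →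
    ∃ (W : C) (g : Z ⟶ W), conflation (f ≫ f') g
  defl_comp : ∀ {A B Z : C} (g : A ⟶ B) (g' : B ⟶ Z),
    (∃ (W : C) (f : W ⟶ A), conflation f g) → (∃ (W : C) (f : W ⟶ B), conflation f g') →
    ∃ (W : C) (f : W ⟶ A), conflation f (g ≫ g')
  pushout : ∀ {A B Z : C} {f : A ⟶ B} {g : B ⟶ Z}, conflation f g →
    ∀ {A' : C} (a : A ⟶ A'), ∃ (B' : C) (f' : A' ⟶ B') (b : B ⟶ B'),
      IsPushout f a b f' ∧ ∃ (W : C) (g' : B' ⟶ W), conflation f' g'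
  pullback : ∀ {A B Z : C} {f : A ⟶ B} {g : B ⟶ Z}, conflation f g →
    ∀ {Z' : C} (c : Z' ⟶ Z), ∃ (B' : C) (g' : B' ⟶ Z') (b : B' ⟶ B),
      IsPullback b g' g c ∧ ∃ (W : C) (f' : W ⟶ B'), conflation f' g'

/-!
The long exact Hom sequences of a distinguished triangle `X → Y → Z → X⟦1⟧` with terms in `𝒜` make
`X → Y → Z` a kernel–cokernel pair in `𝒜`: two factorisations through it differ by a morphism
`X⟦1⟧ ⟶ W` or `W⟦1⟧ ⟶ Z` with `W ∈ 𝒜`, which vanishes since `Hom(𝒜⟦1⟧, 𝒜) = 0`. The pushout along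
`a : X ⟶ X'` is the homotopy pushout, the middle term of a triangle `X' → Y' → Z → X'⟦1⟧` with
connecting morphism `h ≫ a⟦1⟧`; it lies in `𝒜` by closure under extensions, and the same vanishing
makes it a genuine pushout in `𝒜` (dually for pullbacks). Without the octahedral axiom the cone
`Q` of a composite of inflations `f ≫ f'` is not visibly an extension of the two cones `W₁` and
`W₂`; instead `Q` is a retract of the homotopy pushout of the triangle of `f'` along `g : B ⟶ W₁`,
which is such an extension, so `Q ∈ 𝒜` by closure under summands. Deflations follow by running the
same argument in `Cᵒᵖ`.
-/

lemma isPushout_of_exists_desc {D : Type*} [Category D] {P X Y Z : D} {f : P ⟶ X} {g : P ⟶ Y}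
    {inl : X ⟶ Z} {inr : Y ⟶ Z} (w : f ≫ inl = g ≫ inr)
    (desc : ∀ {W : D} (a : X ⟶ W) (b : Y ⟶ W), f ≫ a = g ≫ b →
      ∃ d : Z ⟶ W, inl ≫ d = a ∧ inr ≫ d = b)
    (ext : ∀ {W : D} (d₁ d₂ : Z ⟶ W), inl ≫ d₁ = inl ≫ d₂ → inr ≫ d₁ = inr ≫ d₂ → d₁ = d₂) :
    IsPushout f g inl inr := by
  choose d hd₁ hd₂ using fun s : PushoutCocone f g => desc s.inl s.inr s.condition
  exact IsPushout.of_isColimit (PushoutCocone.IsColimit.mk w d hd₁ hd₂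
    fun s m h₁ h₂ => ext _ _ (h₁.trans (hd₁ s).symm) (h₂.trans (hd₂ s).symm))

lemma isPullback_of_exists_lift {D : Type*} [Category D] {P X Y Z : D} {fst : P ⟶ X}
    {snd : P ⟶ Y} {f : X ⟶ Z} {g : Y ⟶ Z} (w : fst ≫ f = snd ≫ g)
    (lift : ∀ {W : D} (a : W ⟶ X) (b : W ⟶ Y), a ≫ f = b ≫ g →
      ∃ l : W ⟶ P, l ≫ fst = a ∧ l ≫ snd = b)
    (ext : ∀ {W : D} (l₁ l₂ : W ⟶ P), l₁ ≫ fst = l₂ ≫ fst → l₁ ≫ snd = l₂ ≫ snd → l₁ = l₂) :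
    IsPullback fst snd f g := by
  choose l hl₁ hl₂ using fun s : PullbackCone f g => lift s.fst s.snd s.condition
  exact IsPullback.of_isLimit (PullbackCone.IsLimit.mk w l hl₁ hl₂
    fun s m h₁ h₂ => ext _ _ (h₁.trans (hl₁ s).symm) (h₂.trans (hl₂ s).symm))

open CategoryTheory.Pretriangulated.Opposite in
lemma op_shift_hom_eq_zero [HasShift C ℤ] {X Y : C} (hXY : ∀ φ : X⟦(1 : ℤ)⟧ ⟶ Y, φ = 0)
    (φ : (op Y)⟦(1 : ℤ)⟧ ⟶ op X) : φ = 0 := by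
  let adj := (shiftEquiv C (1 : ℤ)).toAdjunction
  let ψ : X ⟶ Y⟦(-1 : ℤ)⟧ := φ.unop
  have hψ : ψ = 0 := (adj.homEquiv X Y).symm.injective ((hXY _).trans (hXY _).symm)
  exact Quiver.Hom.unop_inj hψ

lemma zero_mem_of_retract_closed {𝒜 : Set C} [HasZeroObject C]
    (hret : ∀ (A B : C) (r : A ⟶ B) (s : B ⟶ A), r ≫ s = 𝟙 A → B ∈ 𝒜 → A ∈ 𝒜) {X : C}
    (hX : X ∈ 𝒜) : (0 : C) ∈ 𝒜 :=
  hret 0 X 0 0 ((isZero_zero C).eq_of_src _ _) hX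

section Pretriangulated

variable [HasZeroObject C] [HasShift C ℤ] [∀ k : ℤ, (shiftFunctor C k).Additive]
  [Pretriangulated C]

section Triangle

variable {A B Z : C} {f : A ⟶ B} {g : B ⟶ Z} {h : Z ⟶ A⟦(1 : ℤ)⟧}

lemma eq_of_mor₂_comp_eq (hT : Triangle.mk f g h ∈ distTriang C) {W : C}
    (hW : ∀ φ : A⟦(1 : ℤ)⟧ ⟶ W, φ = 0) {y k : Z ⟶ W} (e : g ≫ y = g ≫ k) : y = k := by
  have hyk : g ≫ (y - k) = 0 := by rw [Preadditive.comp_sub, e, sub_self]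
  obtain ⟨φ, hφ⟩ : ∃ φ : A⟦(1 : ℤ)⟧ ⟶ W, y - k = h ≫ φ :=
    Triangle.yoneda_exact₃ _ hT (y - k) hyk
  rw [hW φ, comp_zero] at hφ
  exact sub_eq_zero.mp hφ

lemma eq_of_comp_mor₁_eq (hT : Triangle.mk f g h ∈ distTriang C) {W : C}
    (hW : ∀ φ : W⟦(1 : ℤ)⟧ ⟶ Z, φ = 0) {y k : W ⟶ A} (e : y ≫ f = k ≫ f) : y = k := by
  have hyk : (y - k)⟦(1 : ℤ)⟧' ≫ f⟦(1 : ℤ)⟧' = 0 := by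
    rw [← Functor.map_comp, Preadditive.sub_comp, e, sub_self, Functor.map_zero]
  obtain ⟨φ, hφ⟩ : ∃ φ : W⟦(1 : ℤ)⟧ ⟶ Z, (y - k)⟦(1 : ℤ)⟧' = φ ≫ h :=
    Triangle.coyoneda_exact₁ _ hT _ hyk
  rw [hW φ, zero_comp] at hφ
  exact sub_eq_zero.mp ((shiftFunctor C (1 : ℤ)).map_injective (by simpa using hφ))

lemma exists_shift_mor₁_comp_eq (hT : Triangle.mk f g h ∈ distTriang C) {U : C}
    (u : A⟦(1 : ℤ)⟧ ⟶ U) (hu : h ≫ u = 0) : ∃ k : B⟦(1 : ℤ)⟧ ⟶ U, f⟦(1 : ℤ)⟧' ≫ k = u := by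
  obtain ⟨k, hk⟩ : ∃ k : B⟦(1 : ℤ)⟧ ⟶ U, u = (-f⟦(1 : ℤ)⟧') ≫ k :=
    Triangle.yoneda_exact₃ _ (rot_of_distTriang _ hT) u hu
  exact ⟨-k, by rw [hk, Preadditive.comp_neg, Preadditive.neg_comp]⟩

lemma exists_mor₁_comp_eq (hT : Triangle.mk f g h ∈ distTriang C) {U : C}
    (α : A ⟶ U) (hα : h ≫ α⟦(1 : ℤ)⟧' = 0) : ∃ γ : B ⟶ U, f ≫ γ = α := by
  obtain ⟨k, hk⟩ := exists_shift_mor₁_comp_eq hT _ hα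
  exact ⟨(shiftFunctor C (1 : ℤ)).preimage k,
    (shiftFunctor C (1 : ℤ)).map_injective (by simpa using hk)⟩

lemma hom_eq_zero_of_distTriang (hT : Triangle.mk f g h ∈ distTriang C) {U : C}
    (hA : ∀ φ : U ⟶ A, φ = 0) (hZ : ∀ φ : U ⟶ Z, φ = 0) (φ : U ⟶ B) : φ = 0 := by
  obtain ⟨k, hk⟩ : ∃ k : U ⟶ A, φ = k ≫ f := Triangle.coyoneda_exact₂ _ hT φ (hZ _)
  rw [hk, hA k, zero_comp]

end Triangle

section HomotopyPushout

variable {A B Z A' B' U : C} {f : A ⟶ B} {g : B ⟶ Z} {h : Z ⟶ A⟦(1 : ℤ)⟧}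

lemma exists_homotopyPushout (hT : Triangle.mk f g h ∈ distTriang C) (a : A ⟶ A') :
    ∃ (B' : C) (f' : A' ⟶ B') (g' : B' ⟶ Z) (b : B ⟶ B'),
      Triangle.mk f' g' (h ≫ a⟦(1 : ℤ)⟧') ∈ distTriang C ∧ f ≫ b = a ≫ f' ∧ b ≫ g' = g := by
  obtain ⟨B', f', g', hT'⟩ := distinguished_cocone_triangle₂ (h ≫ a⟦(1 : ℤ)⟧')
  obtain ⟨b, hb, hb'⟩ :=
    complete_distinguished_triangle_morphism₂ _ _ hT hT' a (𝟙 Z) (Category.id_comp _).symm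
  exact ⟨B', f', g', b, hT', hb, hb'.symm.trans (Category.comp_id g)⟩

variable {a : A ⟶ A'} {f' : A' ⟶ B'} {g' : B' ⟶ Z} {b : B ⟶ B'}

lemma exists_desc_of_homotopyPushout (hT : Triangle.mk f g h ∈ distTriang C)
    (hT' : Triangle.mk f' g' (h ≫ a⟦(1 : ℤ)⟧') ∈ distTriang C)
    (hb : f ≫ b = a ≫ f') (hb' : b ≫ g' = g) (β : B ⟶ U) (α : A' ⟶ U) (w : f ≫ β = a ≫ α) :
    ∃ γ : B' ⟶ U, b ≫ γ = β ∧ f' ≫ γ = α := by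
  have hhf : h ≫ f⟦(1 : ℤ)⟧' = 0 := comp_distTriang_mor_zero₃₁ _ hT
  have hf'g' : f' ≫ g' = 0 := comp_distTriang_mor_zero₁₂ _ hT'
  have hα : (h ≫ a⟦(1 : ℤ)⟧') ≫ α⟦(1 : ℤ)⟧' = 0 := by
    rw [Category.assoc, ← Functor.map_comp, ← w, Functor.map_comp, reassoc_of% hhf, zero_comp]
  obtain ⟨γ₀, hγ₀⟩ := exists_mor₁_comp_eq hT' α hα
  have hβ : f ≫ (b ≫ γ₀ - β) = 0 := by
    rw [Preadditive.comp_sub, reassoc_of% hb, hγ₀, w, sub_self]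
  obtain ⟨ε, hε⟩ : ∃ ε : Z ⟶ U, b ≫ γ₀ - β = g ≫ ε := Triangle.yoneda_exact₂ _ hT _ hβ
  refine ⟨γ₀ - g' ≫ ε, ?_, ?_⟩
  · rw [Preadditive.comp_sub, reassoc_of% hb', ← hε, sub_sub_cancel]
  · rw [Preadditive.comp_sub, reassoc_of% hf'g', hγ₀, zero_comp, sub_zero]

lemma homotopyPushout_hom_ext (hT : Triangle.mk f g h ∈ distTriang C)
    (hT' : Triangle.mk f' g' (h ≫ a⟦(1 : ℤ)⟧') ∈ distTriang C) (hb' : b ≫ g' = g)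
    (hU : ∀ φ : A⟦(1 : ℤ)⟧ ⟶ U, φ = 0) {γ₁ γ₂ : B' ⟶ U}
    (h₁ : b ≫ γ₁ = b ≫ γ₂) (h₂ : f' ≫ γ₁ = f' ≫ γ₂) : γ₁ = γ₂ := by
  have hγ : f' ≫ (γ₁ - γ₂) = 0 := by rw [Preadditive.comp_sub, h₂, sub_self]
  obtain ⟨ε, hε⟩ : ∃ ε : Z ⟶ U, γ₁ - γ₂ = g' ≫ ε := Triangle.yoneda_exact₂ _ hT' _ hγ
  have hε₀ : ε = 0 := eq_of_mor₂_comp_eq hT hU (by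
    rw [comp_zero, ← hb', Category.assoc, ← hε, Preadditive.comp_sub, h₁, sub_self])
  rwa [hε₀, comp_zero, sub_eq_zero] at hε

end HomotopyPushout

section HomotopyPullback

variable {A B Z Z' B' U : C} {f : A ⟶ B} {g : B ⟶ Z} {h : Z ⟶ A⟦(1 : ℤ)⟧}

lemma exists_homotopyPullback (hT : Triangle.mk f g h ∈ distTriang C) (c : Z' ⟶ Z) :
    ∃ (B' : C) (f' : A ⟶ B') (g' : B' ⟶ Z') (b : B' ⟶ B),
      Triangle.mk f' g' (c ≫ h) ∈ distTriang C ∧ f' ≫ b = f ∧ g' ≫ c = b ≫ g := by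
  obtain ⟨B', f', g', hT'⟩ := distinguished_cocone_triangle₂ (c ≫ h)
  have comm : (c ≫ h) ≫ (𝟙 A)⟦(1 : ℤ)⟧' = c ≫ h := by simp
  obtain ⟨b, hb, hb'⟩ := complete_distinguished_triangle_morphism₂ _ _ hT' hT (𝟙 A) c comm
  exact ⟨B', f', g', b, hT', hb.trans (Category.id_comp f), hb'⟩

variable {c : Z' ⟶ Z} {f' : A ⟶ B'} {g' : B' ⟶ Z'} {b : B' ⟶ B}

lemma exists_lift_of_homotopyPullback (hT : Triangle.mk f g h ∈ distTriang C)
    (hT' : Triangle.mk f' g' (c ≫ h) ∈ distTriang C)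
    (hb : f' ≫ b = f) (hb' : g' ≫ c = b ≫ g) (u : U ⟶ B) (v : U ⟶ Z') (w : u ≫ g = v ≫ c) :
    ∃ γ : U ⟶ B', γ ≫ b = u ∧ γ ≫ g' = v := by
  have hgh : g ≫ h = 0 := comp_distTriang_mor_zero₂₃ _ hT
  have hf'g' : f' ≫ g' = 0 := comp_distTriang_mor_zero₁₂ _ hT'
  have hv : v ≫ c ≫ h = 0 := by rw [← Category.assoc, ← w, Category.assoc, hgh, comp_zero]
  obtain ⟨γ₀, hγ₀⟩ : ∃ γ₀ : U ⟶ B', v = γ₀ ≫ g' := Triangle.coyoneda_exact₃ _ hT' v hv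
  have hu : (γ₀ ≫ b - u) ≫ g = 0 := by
    rw [Preadditive.sub_comp, Category.assoc, ← hb', ← Category.assoc, ← hγ₀, w, sub_self]
  obtain ⟨ε, hε⟩ : ∃ ε : U ⟶ A, γ₀ ≫ b - u = ε ≫ f := Triangle.coyoneda_exact₂ _ hT _ hu
  refine ⟨γ₀ - ε ≫ f', ?_, ?_⟩
  · rw [Preadditive.sub_comp, Category.assoc, hb, ← hε, sub_sub_cancel]
  · rw [Preadditive.sub_comp, Category.assoc, hf'g', comp_zero, sub_zero, hγ₀]

lemma homotopyPullback_hom_ext (hT : Triangle.mk f g h ∈ distTriang C)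
    (hT' : Triangle.mk f' g' (c ≫ h) ∈ distTriang C) (hb : f' ≫ b = f)
    (hU : ∀ φ : U⟦(1 : ℤ)⟧ ⟶ Z, φ = 0) {γ₁ γ₂ : U ⟶ B'}
    (h₁ : γ₁ ≫ b = γ₂ ≫ b) (h₂ : γ₁ ≫ g' = γ₂ ≫ g') : γ₁ = γ₂ := by
  have hγ : (γ₁ - γ₂) ≫ g' = 0 := by rw [Preadditive.sub_comp, h₂, sub_self]
  obtain ⟨ε, hε⟩ : ∃ ε : U ⟶ A, γ₁ - γ₂ = ε ≫ f' := Triangle.coyoneda_exact₂ _ hT' _ hγ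
  have hε₀ : ε = 0 := eq_of_comp_mor₁_eq hT hU (by
    rw [zero_comp, ← hb, ← Category.assoc, ← hε, Preadditive.sub_comp, h₁, sub_self])
  rwa [hε₀, zero_comp, sub_eq_zero] at hε

end HomotopyPullback

section Composition

variable {A B Z W₁ W₂ : C}

theorem exists_retract_cone_comp {Q : C} {f : A ⟶ B} {g : B ⟶ W₁} {δ₁ : W₁ ⟶ A⟦(1 : ℤ)⟧}
    {f' : B ⟶ Z} {g' : Z ⟶ W₂} {δ₂ : W₂ ⟶ B⟦(1 : ℤ)⟧} {p : Z ⟶ Q} {q : Q ⟶ A⟦(1 : ℤ)⟧}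
    (hT₁ : Triangle.mk f g δ₁ ∈ distTriang C) (hT₂ : Triangle.mk f' g' δ₂ ∈ distTriang C)
    (hT₃ : Triangle.mk (f ≫ f') p q ∈ distTriang C)
    (h₁ : ∀ φ : A⟦(1 : ℤ)⟧ ⟶ W₁, φ = 0) (h₂ : ∀ φ : A⟦(1 : ℤ)⟧ ⟶ W₂, φ = 0) :
    ∃ (P : C) (j : W₁ ⟶ P) (r : P ⟶ W₂) (δ : W₂ ⟶ W₁⟦(1 : ℤ)⟧),
      Triangle.mk j r δ ∈ distTriang C ∧ Nonempty (Retract Q P) := by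
  obtain ⟨P, j, r, b, hT₄, hb, hb'⟩ := exists_homotopyPushout hT₂ g
  have hP : ∀ φ : A⟦(1 : ℤ)⟧ ⟶ P, φ = 0 := hom_eq_zero_of_distTriang hT₄ h₁ h₂
  have hfg : f ≫ g = 0 := comp_distTriang_mor_zero₁₂ _ hT₁
  obtain ⟨w, hw, hw'⟩ : ∃ w : W₁ ⟶ Q, g ≫ w = f' ≫ p ∧ δ₁ ≫ (𝟙 A)⟦(1 : ℤ)⟧' = w ≫ q :=
    complete_distinguished_triangle_morphism _ _ hT₁ hT₃ (𝟙 A) f' (Category.id_comp _).symm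
  replace hw' : δ₁ = w ≫ q := by simpa using hw'
  obtain ⟨v, hv, hv'⟩ : ∃ v : Q ⟶ W₂, p ≫ v = 𝟙 Z ≫ g' ∧ q ≫ f⟦(1 : ℤ)⟧' = v ≫ δ₂ :=
    complete_distinguished_triangle_morphism _ _ hT₃ hT₂ f (𝟙 Z) (Category.comp_id _)
  rw [Category.id_comp] at hv
  obtain ⟨ψ, hbψ, hjψ⟩ := exists_desc_of_homotopyPushout hT₂ hT₄ hb hb' p w hw.symm
  have hb₀ : (f ≫ f') ≫ b = 0 := by rw [Category.assoc, hb, reassoc_of% hfg, zero_comp]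
  obtain ⟨φ, hφ⟩ : ∃ φ : Q ⟶ P, b = p ≫ φ := Triangle.yoneda_exact₂ _ hT₃ b hb₀
  have hwφ : w ≫ φ = j := eq_of_mor₂_comp_eq hT₁ hP (by rw [reassoc_of% hw, ← hφ, hb])
  have hφr : φ ≫ r = v := eq_of_mor₂_comp_eq hT₃ h₂ (by rw [← reassoc_of% hφ, hb', hv])
  have hp : p ≫ (φ ≫ ψ - 𝟙 Q) = 0 := by
    rw [Preadditive.comp_sub, ← reassoc_of% hφ, hbψ, Category.comp_id, sub_self]
  obtain ⟨e, he⟩ : ∃ e : A⟦(1 : ℤ)⟧ ⟶ Q, φ ≫ ψ - 𝟙 Q = q ≫ e :=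
    Triangle.yoneda_exact₃ _ hT₃ _ hp
  have hδ₁e : δ₁ ≫ e = 0 := by
    rw [hw', Category.assoc, ← he, Preadditive.comp_sub, reassoc_of% hwφ, hjψ,
      Category.comp_id, sub_self]
  obtain ⟨e', he'⟩ := exists_shift_mor₁_comp_eq hT₁ e hδ₁e
  -- `φ ≫ ψ - 𝟙 Q = q ≫ f⟦1⟧' ≫ e' = φ ≫ r ≫ δ₂ ≫ e'`, so correcting `ψ` gives a retraction.
  refine ⟨P, j, r, _, hT₄, ⟨⟨φ, ψ - r ≫ δ₂ ≫ e', ?_⟩⟩⟩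
  rw [Preadditive.comp_sub, reassoc_of% hφr, ← reassoc_of% hv', he', ← he, sub_sub_cancel]

open CategoryTheory.Pretriangulated.Opposite in
theorem exists_retract_cocone_comp {K : C} {f : W₁ ⟶ A} {g : A ⟶ B} {δ₁ : B ⟶ W₁⟦(1 : ℤ)⟧}
    {f' : W₂ ⟶ B} {g' : B ⟶ Z} {δ₂ : Z ⟶ W₂⟦(1 : ℤ)⟧} {k : K ⟶ A} {δ₃ : Z ⟶ K⟦(1 : ℤ)⟧}
    (hT₁ : Triangle.mk f g δ₁ ∈ distTriang C) (hT₂ : Triangle.mk f' g' δ₂ ∈ distTriang C)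
    (hT₃ : Triangle.mk k (g ≫ g') δ₃ ∈ distTriang C)
    (h₁ : ∀ φ : W₁⟦(1 : ℤ)⟧ ⟶ Z, φ = 0) (h₂ : ∀ φ : W₂⟦(1 : ℤ)⟧ ⟶ Z, φ = 0) :
    ∃ (P : C) (j : W₁ ⟶ P) (r : P ⟶ W₂) (δ : W₂ ⟶ W₁⟦(1 : ℤ)⟧),
      Triangle.mk j r δ ∈ distTriang C ∧ Nonempty (Retract K P) := by
  obtain ⟨P, j, r, _, hT₄, ⟨R⟩⟩ : ∃ (P : Cᵒᵖ) (j : op W₂ ⟶ P) (r : P ⟶ op W₁)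
      (δ : op W₁ ⟶ (op W₂)⟦(1 : ℤ)⟧), Triangle.mk j r δ ∈ distTriang Cᵒᵖ ∧
        Nonempty (Retract (op K) P) := exists_retract_cone_comp (op_distinguished _ hT₂)
    (op_distinguished _ hT₁) (op_distinguished _ hT₃) (op_shift_hom_eq_zero h₂)
    (op_shift_hom_eq_zero h₁)
  exact ⟨P.unop, r.unop, j.unop, _, unop_distinguished _ hT₄,
    ⟨⟨R.r.unop, R.i.unop, congrArg Quiver.Hom.unop R.retract⟩⟩⟩

end Composition

section Subcategory

variable {𝒜 : Set C}

def IsConflation {X Y Z : ObjectProperty.FullSubcategory (· ∈ 𝒜)} (f : X ⟶ Y) (g : Y ⟶ Z) :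
    Prop :=
  ∃ h : Z.obj ⟶ X.obj⟦(1 : ℤ)⟧, Triangle.mk f.hom g.hom h ∈ distTriang C

def IsInflation {X Y : ObjectProperty.FullSubcategory (· ∈ 𝒜)} (f : X ⟶ Y) : Prop :=
  ∃ (Z : ObjectProperty.FullSubcategory (· ∈ 𝒜)) (g : Y ⟶ Z), IsConflation f g

def IsDeflation {Y Z : ObjectProperty.FullSubcategory (· ∈ 𝒜)} (g : Y ⟶ Z) : Prop :=
  ∃ (X : ObjectProperty.FullSubcategory (· ∈ 𝒜)) (f : X ⟶ Y), IsConflation f g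

variable {X Y Z X' Y' Z' : ObjectProperty.FullSubcategory (· ∈ 𝒜)} {f : X ⟶ Y} {g : Y ⟶ Z}

lemma IsConflation.comp_eq_zero (hfg : IsConflation f g) : f ≫ g = 0 := by
  obtain ⟨h, hT⟩ := hfg
  exact InducedCategory.hom_ext (comp_distTriang_mor_zero₁₂ _ hT)

lemma IsConflation.existsUnique_lift
    (hvan : ∀ X ∈ 𝒜, ∀ Y ∈ 𝒜, ∀ φ : X⟦(1 : ℤ)⟧ ⟶ Y, φ = 0) (hfg : IsConflation f g)
    (W : ObjectProperty.FullSubcategory (· ∈ 𝒜)) (u : W ⟶ Y) (hu : u ≫ g = 0) :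
    ∃! k : W ⟶ X, k ≫ f = u := by
  obtain ⟨h, hT⟩ := hfg
  obtain ⟨k, hk⟩ : ∃ k : W.obj ⟶ X.obj, u.hom = k ≫ f.hom :=
    Triangle.coyoneda_exact₂ _ hT u.hom (congrArg (·.hom) hu)
  refine ⟨ObjectProperty.homMk k, InducedCategory.hom_ext hk.symm, fun k' hk' => ?_⟩
  exact InducedCategory.hom_ext
    (eq_of_comp_mor₁_eq hT (hvan _ W.2 _ Z.2) ((congrArg (·.hom) hk').trans hk))

lemma IsConflation.existsUnique_desc
    (hvan : ∀ X ∈ 𝒜, ∀ Y ∈ 𝒜, ∀ φ : X⟦(1 : ℤ)⟧ ⟶ Y, φ = 0) (hfg : IsConflation f g)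
    (W : ObjectProperty.FullSubcategory (· ∈ 𝒜)) (u : Y ⟶ W) (hu : f ≫ u = 0) :
    ∃! k : Z ⟶ W, g ≫ k = u := by
  obtain ⟨h, hT⟩ := hfg
  obtain ⟨k, hk⟩ : ∃ k : Z.obj ⟶ W.obj, u.hom = g.hom ≫ k :=
    Triangle.yoneda_exact₂ _ hT u.hom (congrArg (·.hom) hu)
  refine ⟨ObjectProperty.homMk k, InducedCategory.hom_ext hk.symm, fun k' hk' => ?_⟩
  exact InducedCategory.hom_ext
    (eq_of_mor₂_comp_eq hT (hvan _ X.2 _ W.2) ((congrArg (·.hom) hk').trans hk))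

lemma IsConflation.of_iso (hfg : IsConflation f g) (eX : X ≅ X') (eY : Y ≅ Y') (eZ : Z ≅ Z')
    (f' : X' ⟶ Y') (g' : Y' ⟶ Z') (comm₁ : f ≫ eY.hom = eX.hom ≫ f')
    (comm₂ : g ≫ eZ.hom = eY.hom ≫ g') : IsConflation f' g' := by
  obtain ⟨h, hT⟩ := hfg
  let ι := ObjectProperty.ι (· ∈ 𝒜)
  refine ⟨eZ.inv.hom ≫ h ≫ eX.hom.hom⟦(1 : ℤ)⟧', isomorphic_distinguished _ hT _
    (Triangle.isoMk _ _ (ι.mapIso eX) (ι.mapIso eY) (ι.mapIso eZ)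
      (congrArg (·.hom) comm₁) (congrArg (·.hom) comm₂) ?_).symm⟩
  exact (ObjectProperty.isoHom_inv_id_hom_assoc eZ _).symm

lemma IsInflation.comp
    (hret : ∀ (A B : C) (r : A ⟶ B) (s : B ⟶ A), r ≫ s = 𝟙 A → B ∈ 𝒜 → A ∈ 𝒜)
    (hext : ∀ T : Triangle C, T ∈ distTriang C → T.obj₁ ∈ 𝒜 → T.obj₃ ∈ 𝒜 → T.obj₂ ∈ 𝒜)
    (hvan : ∀ X ∈ 𝒜, ∀ Y ∈ 𝒜, ∀ φ : X⟦(1 : ℤ)⟧ ⟶ Y, φ = 0)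
    {f' : Y ⟶ Z} (hf : IsInflation f) (hf' : IsInflation f') : IsInflation (f ≫ f') := by
  obtain ⟨W₁, g, δ₁, hT₁⟩ := hf
  obtain ⟨W₂, g', δ₂, hT₂⟩ := hf'
  obtain ⟨Q, p, q, hT₃⟩ := distinguished_cocone_triangle (f.hom ≫ f'.hom)
  obtain ⟨P, _, _, _, hT₄, ⟨R⟩⟩ := exists_retract_cone_comp hT₁ hT₂ hT₃
    (hvan _ X.2 _ W₁.2) (hvan _ X.2 _ W₂.2)
  exact ⟨⟨Q, hret _ _ R.i R.r R.retract (hext _ hT₄ W₁.2 W₂.2)⟩, ObjectProperty.homMk p, q, hT₃⟩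

lemma IsDeflation.comp
    (hret : ∀ (A B : C) (r : A ⟶ B) (s : B ⟶ A), r ≫ s = 𝟙 A → B ∈ 𝒜 → A ∈ 𝒜)
    (hext : ∀ T : Triangle C, T ∈ distTriang C → T.obj₁ ∈ 𝒜 → T.obj₃ ∈ 𝒜 → T.obj₂ ∈ 𝒜)
    (hvan : ∀ X ∈ 𝒜, ∀ Y ∈ 𝒜, ∀ φ : X⟦(1 : ℤ)⟧ ⟶ Y, φ = 0)
    {g' : Z ⟶ Z'} (hg : IsDeflation g) (hg' : IsDeflation g') : IsDeflation (g ≫ g') := by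
  obtain ⟨W₁, f, δ₁, hT₁⟩ := hg
  obtain ⟨W₂, f', δ₂, hT₂⟩ := hg'
  obtain ⟨K, k, δ, hT₃⟩ := distinguished_cocone_triangle₁ (g.hom ≫ g'.hom)
  obtain ⟨P, _, _, _, hT₄, ⟨R⟩⟩ := exists_retract_cocone_comp hT₁ hT₂ hT₃
    (hvan _ W₁.2 _ Z'.2) (hvan _ W₂.2 _ Z'.2)
  exact ⟨⟨K, hret _ _ R.i R.r R.retract (hext _ hT₄ W₁.2 W₂.2)⟩, ObjectProperty.homMk k, δ, hT₃⟩

lemma IsConflation.exists_isPushout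
    (hext : ∀ T : Triangle C, T ∈ distTriang C → T.obj₁ ∈ 𝒜 → T.obj₃ ∈ 𝒜 → T.obj₂ ∈ 𝒜)
    (hvan : ∀ X ∈ 𝒜, ∀ Y ∈ 𝒜, ∀ φ : X⟦(1 : ℤ)⟧ ⟶ Y, φ = 0) (hfg : IsConflation f g)
    (a : X ⟶ X') : ∃ (Y' : ObjectProperty.FullSubcategory (· ∈ 𝒜)) (f' : X' ⟶ Y') (b : Y ⟶ Y'),
      IsPushout f a b f' ∧ IsInflation f' := by
  obtain ⟨h, hT⟩ := hfg
  obtain ⟨B', f', g', b, hT', hb, hb'⟩ := exists_homotopyPushout hT a.hom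
  let Y' : ObjectProperty.FullSubcategory (· ∈ 𝒜) := ⟨B', hext _ hT' X'.2 Z.2⟩
  refine ⟨Y', ObjectProperty.homMk f', ObjectProperty.homMk b,
    isPushout_of_exists_desc (InducedCategory.hom_ext hb) (fun β α w => ?_)
      (fun {W} γ₁ γ₂ h₁ h₂ => ?_), Z, ObjectProperty.homMk g', _, hT'⟩
  · obtain ⟨γ, hγ₁, hγ₂⟩ :=
      exists_desc_of_homotopyPushout hT hT' hb hb' β.hom α.hom (congrArg (·.hom) w)
    exact ⟨ObjectProperty.homMk γ, InducedCategory.hom_ext hγ₁, InducedCategory.hom_ext hγ₂⟩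
  · exact InducedCategory.hom_ext (homotopyPushout_hom_ext hT hT' hb' (hvan _ X.2 _ W.2)
      (congrArg (·.hom) h₁) (congrArg (·.hom) h₂))

lemma IsConflation.exists_isPullback
    (hext : ∀ T : Triangle C, T ∈ distTriang C → T.obj₁ ∈ 𝒜 → T.obj₃ ∈ 𝒜 → T.obj₂ ∈ 𝒜)
    (hvan : ∀ X ∈ 𝒜, ∀ Y ∈ 𝒜, ∀ φ : X⟦(1 : ℤ)⟧ ⟶ Y, φ = 0) (hfg : IsConflation f g)
    (c : Z' ⟶ Z) : ∃ (Y' : ObjectProperty.FullSubcategory (· ∈ 𝒜)) (g' : Y' ⟶ Z') (b : Y' ⟶ Y),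
      IsPullback b g' g c ∧ IsDeflation g' := by
  obtain ⟨h, hT⟩ := hfg
  obtain ⟨B', f', g', b, hT', hb, hb'⟩ := exists_homotopyPullback hT c.hom
  let Y' : ObjectProperty.FullSubcategory (· ∈ 𝒜) := ⟨B', hext _ hT' X.2 Z'.2⟩
  refine ⟨Y', ObjectProperty.homMk g', ObjectProperty.homMk b,
    isPullback_of_exists_lift (InducedCategory.hom_ext hb'.symm) (fun u v w => ?_)
      (fun {W} γ₁ γ₂ h₁ h₂ => ?_), X, ObjectProperty.homMk f', _, hT'⟩
  · obtain ⟨γ, hγ₁, hγ₂⟩ :=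
      exists_lift_of_homotopyPullback hT hT' hb hb' u.hom v.hom (congrArg (·.hom) w)
    exact ⟨ObjectProperty.homMk γ, InducedCategory.hom_ext hγ₁, InducedCategory.hom_ext hγ₂⟩
  · exact InducedCategory.hom_ext (homotopyPullback_hom_ext hT hT' hb (hvan _ W.2 _ Z.2)
      (congrArg (·.hom) h₁) (congrArg (·.hom) h₂))

end Subcategory

end Pretriangulated

/-- Dyer's theorem; the `n = 1` case of the paper's main result.
Let `T` be a Krull–Schmidt triangulated category and `𝒜` a full subcategory closed under
isomorphisms, direct sums, direct summands and extensions, with `Hom(𝒜[1], 𝒜) = 0`.  Then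
`𝒜` carries the structure of a Quillen exact category whose conflations are the sequences
`X → Y → Z` in `𝒜` fitting into a distinguished triangle `X → Y → Z → X[1]` of `T`. -/
theorem stmt15 {C : Type u} [Category.{v} C] [Preadditive C] [HasZeroObject C]
    [HasShift C ℤ] [∀ k : ℤ, (shiftFunctor C k).Additive] [Pretriangulated C]
    [HasFiniteBiproducts C] (hKS : IsKrullSchmidt C)
    (𝒜 : Set C) (hgood : GoodSubcat 𝒜)
    (hext : ∀ T : Triangle C, T ∈ (distTriang C) → T.obj₁ ∈ 𝒜 → T.obj₃ ∈ 𝒜 → T.obj₂ ∈ 𝒜)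
    (hvan : ∀ X ∈ 𝒜, ∀ Y ∈ 𝒜, ∀ φ : X⟦(1 : ℤ)⟧ ⟶ Y, φ = 0) :
    ∃ Q : QuillenExactCategory (ObjectProperty.FullSubcategory (· ∈ 𝒜)),
      ∀ (X Y Z : ObjectProperty.FullSubcategory (· ∈ 𝒜)) (f : X ⟶ Y) (g : Y ⟶ Z),
        Q.conflation f g ↔
          ∃ h : (ObjectProperty.ι (· ∈ 𝒜)).obj Z ⟶
              ((ObjectProperty.ι (· ∈ 𝒜)).obj X)⟦(1 : ℤ)⟧,
            Triangle.mk ((ObjectProperty.ι (· ∈ 𝒜)).map f)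
              ((ObjectProperty.ι (· ∈ 𝒜)).map g) h ∈ distTriang C := by
  have hret := hgood.2.2
  refine ⟨{
      conflation := fun _ _ _ f g => IsConflation f g
      comp_zero := IsConflation.comp_eq_zero
      ker := fun hfg => hfg.existsUnique_lift hvan
      cok := fun hfg => hfg.existsUnique_desc hvan
      iso_closed := fun eX eY eZ f' g' hfg => hfg.of_iso eX eY eZ f' g'
      id_infl := fun X => ⟨⟨0, zero_mem_of_retract_closed hret X.2⟩, 0, 0,
        contractible_distinguished X.obj⟩
      id_defl := fun X => ⟨⟨0, zero_mem_of_retract_closed hret X.2⟩, 0, 0,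
        contractible_distinguished₁ X.obj⟩
      infl_comp := fun _ _ hf hf' => IsInflation.comp hret hext hvan hf hf'
      defl_comp := fun _ _ hg hg' => IsDeflation.comp hret hext hvan hg hg'
      pushout := fun hfg _ a => hfg.exists_isPushout hext hvan a
      pullback := fun hfg _ c => hfg.exists_isPullback hext hvan c }, fun _ _ _ _ _ => Iff.rfl⟩

end NExangPaper
end

section
/- Let T be a Krull–Schmidt triangulated category and A an extension-closed full subcategory with Hom_T(A[1], A) = 0. Let a : A → B and b : B → C be morphisms in A such that b∘a occurs in a distinguished triangle A →(b∘a) C → Z → A[1] with Z ∈ A. Then a occurs in a distinguished triangle A →(a) B → Z' → A[1] with Z' ∈ A. -/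
open CategoryTheory CategoryTheory.Limits CategoryTheory.Pretriangulated Opposite ZeroObject

universe v u

namespace NExangPaper

attribute [local instance] CategoryTheory.Limits.hasBinaryBiproducts_of_finite_biproducts

variable {C : Type u} [Category.{v} C] [Preadditive C]

/-!
Complete `a` to a triangle `A ⟶ B ⟶ Y ⟶ A⟦1⟧` and let `V` be the cone of
`(b, i) : B ⟶ Z ⊞ Y`. Once `V ≅ Cn`, the object `Z ⊞ Y` is an extension of `Cn` by `B`, hence in
`𝒜`, and so is its summand `Y`. The octahedral axiom would give `V ≅ Cn` directly; here it comes
from the vanishing hypotheses instead. Comparison maps `σ : Cn ⟶ V` and `ρ : V ⟶ Cn` satisfy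
`σ ≫ ρ = 𝟙` because `Hom(A⟦1⟧, Cn) = 0`, and `𝟙 - ρ ≫ σ` is an idempotent factoring through
`V ⟶ B⟦1⟧` whose square vanishes because `Hom(B, Cn⟦-1⟧) = 0`.
-/

section

open Category Preadditive

variable [HasShift C ℤ] [∀ k : ℤ, (shiftFunctor C k).Additive]

lemma eq_zero_of_shift_one_hom_eq_zero {X Y : C} (hXY : ∀ φ : X⟦(1 : ℤ)⟧ ⟶ Y, φ = 0)
    (f : X ⟶ Y⟦(-1 : ℤ)⟧) : f = 0 := by
  apply (shiftFunctor C (1 : ℤ)).map_injective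
  rw [Functor.map_zero,
    ← cancel_mono ((shiftFunctorCompIsoId C (-1 : ℤ) 1 (by norm_num)).hom.app Y),
    hXY (_ ≫ _), zero_comp]

variable [HasZeroObject C] [Pretriangulated C]

lemma Triangle.eq_of_mor₂_comp_eq {T : Triangle C} (hT : T ∈ distTriang C) {W : C}
    (hW : ∀ φ : T.obj₁⟦(1 : ℤ)⟧ ⟶ W, φ = 0) {φ ψ : T.obj₃ ⟶ W}
    (hφψ : T.mor₂ ≫ φ = T.mor₂ ≫ ψ) : φ = ψ := by
  obtain ⟨θ, hθ⟩ := Triangle.yoneda_exact₃ T hT (φ - ψ) (by rw [comp_sub, hφψ, sub_self])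
  rwa [hW θ, comp_zero, sub_eq_zero] at hθ

variable [HasBinaryBiproducts C] {A B Y Z Cn : C} {a : A ⟶ B} {b : B ⟶ Z} {i : B ⟶ Y}
  {j : Y ⟶ A⟦(1 : ℤ)⟧} {g : Z ⟶ Cn} {h : Cn ⟶ A⟦(1 : ℤ)⟧}

lemma eq_zero_of_comp_lift_eq_zero (hT₁ : Triangle.mk a i j ∈ distTriang C)
    (hT : Triangle.mk (a ≫ b) g h ∈ distTriang C) {X : C}
    (hX : ∀ φ : X ⟶ Cn⟦(-1 : ℤ)⟧, φ = 0) (x : X ⟶ B) (hx : x ≫ biprod.lift b i = 0) :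
    x = 0 := by
  have hxb : x ≫ b = 0 := by simpa using hx =≫ biprod.fst
  have hxi : x ≫ i = 0 := by simpa using hx =≫ biprod.snd
  obtain ⟨t, rfl⟩ : ∃ t : X ⟶ A, x = t ≫ a := Triangle.coyoneda_exact₂ _ hT₁ x hxi
  have htab : t ≫ a ≫ b = 0 := by simpa using hxb
  obtain ⟨s, hs⟩ : ∃ s : X ⟶ Cn⟦(-1 : ℤ)⟧, t = s ≫ _ :=
    Triangle.coyoneda_exact₂ _ (inv_rot_of_distTriang _ hT) t htab
  have ht : t = 0 := by rw [hs, hX s]; exact zero_comp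
  rw [ht, zero_comp]

variable {c : Y ⟶ Cn}

/-- `B ⟶ Z ⊞ Y ⟶ Cn` is weakly exact in the middle: `Z ⊞ Y` is a weak pullback of `g` and `c`. -/
lemma exists_eq_comp_lift_of_comp_desc_eq_zero (hT₁ : Triangle.mk a i j ∈ distTriang C)
    (hT : Triangle.mk (a ≫ b) g h ∈ distTriang C) (hic : i ≫ c = b ≫ g) (hjc : j = c ≫ h)
    {X : C} (l : X ⟶ Z ⊞ Y) (hl : l ≫ biprod.desc g (-c) = 0) :
    ∃ k : X ⟶ B, l = k ≫ biprod.lift b i := by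
  have hgc : (l ≫ biprod.fst) ≫ g = (l ≫ biprod.snd) ≫ c := by
    rw [← sub_eq_zero, ← hl, biprod.desc_eq]
    simp [sub_eq_add_neg]
  have hgh : g ≫ h = 0 := comp_distTriang_mor_zero₂₃ _ hT
  have hj : (l ≫ biprod.snd) ≫ j = 0 := by
    rw [hjc, ← assoc, ← hgc, assoc, hgh, comp_zero]
  obtain ⟨k, hk⟩ : ∃ k : X ⟶ B, l ≫ biprod.snd = k ≫ i :=
    Triangle.coyoneda_exact₃ _ hT₁ _ hj
  have hg : (l ≫ biprod.fst - k ≫ b) ≫ g = 0 := by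
    rw [sub_comp, hgc, hk, assoc, assoc, hic, sub_self]
  obtain ⟨t, ht⟩ : ∃ t : X ⟶ A, l ≫ biprod.fst - k ≫ b = t ≫ a ≫ b :=
    Triangle.coyoneda_exact₂ _ hT _ hg
  refine ⟨k + t ≫ a, biprod.hom_ext _ _ ?_ ?_⟩
  · simp [← ht]
  · have hai : a ≫ i = 0 := comp_distTriang_mor_zero₁₂ _ hT₁
    simp [hk, hai]

variable {V : C} {v : Z ⊞ Y ⟶ V} {w : V ⟶ B⟦(1 : ℤ)⟧} {σ : Cn ⟶ V} {ρ : V ⟶ Cn}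

lemma desc_comp_eq_of_comp_eq_id (hT₁ : Triangle.mk a i j ∈ distTriang C)
    (hT : Triangle.mk (a ≫ b) g h ∈ distTriang C)
    (hTu : Triangle.mk (biprod.lift b i) v w ∈ distTriang C)
    (hic : i ≫ c = b ≫ g) (hjc : j = c ≫ h)
    (hgσ : g ≫ σ = biprod.inl ≫ v) (hσw : h ≫ a⟦(1 : ℤ)⟧' = σ ≫ w)
    (hρ : v ≫ ρ = biprod.desc g (-c)) (hσρ : σ ≫ ρ = 𝟙 Cn) :
    biprod.desc g (-c) ≫ σ = v := by
  have hja : j ≫ a⟦(1 : ℤ)⟧' = 0 := comp_distTriang_mor_zero₃₁ _ hT₁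
  have hvw : v ≫ w = 0 := comp_distTriang_mor_zero₂₃ _ hTu
  have hκw : (c ≫ σ + biprod.inr ≫ v) ≫ w = 0 := by
    rw [add_comp, assoc, assoc, ← hσw, ← assoc, ← hjc, hja, hvw, comp_zero, add_zero]
  obtain ⟨l, hl⟩ : ∃ l : Y ⟶ Z ⊞ Y, c ≫ σ + biprod.inr ≫ v = l ≫ v :=
    Triangle.coyoneda_exact₃ _ hTu _ hκw
  obtain ⟨k, rfl⟩ := exists_eq_comp_lift_of_comp_desc_eq_zero hT₁ hT hic hjc l (by
    rw [← hρ, ← assoc, ← hl, add_comp, assoc, hσρ, assoc, hρ]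
    simp)
  have hκ : c ≫ σ + biprod.inr ≫ v = 0 := by
    have huv : biprod.lift b i ≫ v = 0 := comp_distTriang_mor_zero₁₂ _ hTu
    rw [hl, assoc, huv, comp_zero]
  apply biprod.hom_ext'
  · simp [hgσ]
  · simp [eq_neg_of_add_eq_zero_left hκ]

lemma comp_eq_id_of_desc_comp_eq (hT₁ : Triangle.mk a i j ∈ distTriang C)
    (hT : Triangle.mk (a ≫ b) g h ∈ distTriang C)
    (hTu : Triangle.mk (biprod.lift b i) v w ∈ distTriang C)
    (hB : ∀ φ : B ⟶ Cn⟦(-1 : ℤ)⟧, φ = 0)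
    (hρ : v ≫ ρ = biprod.desc g (-c)) (hσ : biprod.desc g (-c) ≫ σ = v)
    (hσρ : σ ≫ ρ = 𝟙 Cn) : ρ ≫ σ = 𝟙 V := by
  have hv : v ≫ (𝟙 V - ρ ≫ σ) = 0 := by
    rw [comp_sub, comp_id, ← assoc, hρ, hσ, sub_self]
  obtain ⟨ζ, hζ⟩ : ∃ ζ : B⟦(1 : ℤ)⟧ ⟶ V, 𝟙 V - ρ ≫ σ = w ≫ ζ :=
    Triangle.yoneda_exact₃ _ hTu _ hv
  have hζw : ζ ≫ w = 0 := by
    obtain ⟨m, hm⟩ : ∃ m : B ⟶ B, m⟦(1 : ℤ)⟧' = ζ ≫ w :=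
      (shiftFunctor C (1 : ℤ)).map_surjective (ζ ≫ w)
    have hwu : w ≫ (biprod.lift b i)⟦(1 : ℤ)⟧' = 0 := comp_distTriang_mor_zero₃₁ _ hTu
    have hmu : m ≫ biprod.lift b i = 0 := (shiftFunctor C (1 : ℤ)).map_injective (by
      rw [Functor.map_comp, hm, assoc, hwu, comp_zero, Functor.map_zero])
    rw [← hm, eq_zero_of_comp_lift_eq_zero hT₁ hT hB m hmu, Functor.map_zero]
  have hidem : (𝟙 V - ρ ≫ σ) ≫ (𝟙 V - ρ ≫ σ) = 𝟙 V - ρ ≫ σ := by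
    simp only [sub_comp, comp_sub, id_comp, comp_id, assoc, reassoc_of% hσρ]
    abel
  have hsq : (𝟙 V - ρ ≫ σ) ≫ (𝟙 V - ρ ≫ σ) = 0 := by
    rw [hζ, assoc, reassoc_of% hζw, zero_comp, comp_zero]
  rw [← sub_eq_zero, ← neg_sub, ← hidem, hsq, neg_zero]

lemma nonempty_iso_cone_lift (hT₁ : Triangle.mk a i j ∈ distTriang C)
    (hT : Triangle.mk (a ≫ b) g h ∈ distTriang C)
    (hTu : Triangle.mk (biprod.lift b i) v w ∈ distTriang C)
    (hA : ∀ φ : A⟦(1 : ℤ)⟧ ⟶ Cn, φ = 0) (hB : ∀ φ : B ⟶ Cn⟦(-1 : ℤ)⟧, φ = 0) :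
    Nonempty (Cn ≅ V) := by
  obtain ⟨c, hic, hjc⟩ : ∃ c : Y ⟶ Cn, i ≫ c = b ≫ g ∧ j ≫ (𝟙 A)⟦(1 : ℤ)⟧' = c ≫ h :=
    complete_distinguished_triangle_morphism _ _ hT₁ hT (𝟙 A) b (id_comp _).symm
  replace hjc : j = c ≫ h := by simpa using hjc
  have hai : a ≫ i = 0 := comp_distTriang_mor_zero₁₂ _ hT₁
  have hinl : (a ≫ b) ≫ biprod.inl = a ≫ biprod.lift b i := by ext <;> simp [hai]
  obtain ⟨σ, hgσ, hσw⟩ : ∃ σ : Cn ⟶ V, g ≫ σ = biprod.inl ≫ v ∧ h ≫ a⟦(1 : ℤ)⟧' = σ ≫ w :=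
    complete_distinguished_triangle_morphism _ _ hT hTu a biprod.inl hinl
  have hudesc : biprod.lift b i ≫ biprod.desc g (-c) = 0 := by
    rw [biprod.lift_desc, comp_neg, hic, add_neg_cancel]
  obtain ⟨ρ, hρ⟩ : ∃ ρ : V ⟶ Cn, biprod.desc g (-c) = v ≫ ρ :=
    Triangle.yoneda_exact₂ _ hTu _ hudesc
  have hgσρ : g ≫ σ ≫ ρ = g ≫ 𝟙 Cn := by
    rw [reassoc_of% hgσ, ← hρ, biprod.inl_desc, comp_id]
  have hσρ : σ ≫ ρ = 𝟙 Cn := Triangle.eq_of_mor₂_comp_eq hT hA hgσρ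
  have hσ := desc_comp_eq_of_comp_eq_id hT₁ hT hTu hic hjc hgσ hσw hρ.symm hσρ
  exact ⟨⟨σ, ρ, hσρ, comp_eq_id_of_desc_comp_eq hT₁ hT hTu hB hρ.symm hσ hσρ⟩⟩

end

/-- Let `T` be a Krull–Schmidt triangulated category and `𝒜` an
extension-closed subcategory with `Hom(𝒜[1], 𝒜) = 0`.  If `a : A ⟶ B` and `b : B ⟶ Z` are
morphisms in `𝒜` such that `b ∘ a` occurs in a distinguished triangle with cone in `𝒜`,
then `a` also occurs in a distinguished triangle with cone in `𝒜`. -/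
theorem stmt17 {C : Type u} [Category.{v} C] [Preadditive C] [HasZeroObject C]
    [HasShift C ℤ] [∀ k : ℤ, (shiftFunctor C k).Additive] [Pretriangulated C]
    [HasFiniteBiproducts C] (hKS : IsKrullSchmidt C)
    (𝒜 : Set C) (hgood : GoodSubcat 𝒜)
    (hext : ∀ T : Triangle C, T ∈ (distTriang C) → T.obj₁ ∈ 𝒜 → T.obj₃ ∈ 𝒜 → T.obj₂ ∈ 𝒜)
    (hvan : ∀ X ∈ 𝒜, ∀ Y ∈ 𝒜, ∀ φ : X⟦(1 : ℤ)⟧ ⟶ Y, φ = 0)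
    {A B Z : C} (hA : A ∈ 𝒜) (hB : B ∈ 𝒜) (hZ : Z ∈ 𝒜)
    (a : A ⟶ B) (b : B ⟶ Z)
    {Cn : C} (hCn : Cn ∈ 𝒜) (g : Z ⟶ Cn) (h : Cn ⟶ A⟦(1 : ℤ)⟧)
    (hT : Triangle.mk (a ≫ b) g h ∈ distTriang C) :
    ∃ (Cn' : C), Cn' ∈ 𝒜 ∧ ∃ (g' : B ⟶ Cn') (h' : Cn' ⟶ A⟦(1 : ℤ)⟧),
      Triangle.mk a g' h' ∈ distTriang C := by
  obtain ⟨Y, i, j, hT₁⟩ := distinguished_cocone_triangle a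
  obtain ⟨V, v, w, hTu⟩ := distinguished_cocone_triangle (biprod.lift b i)
  obtain ⟨e⟩ := nonempty_iso_cone_lift hT₁ hT hTu (hvan A hA Cn hCn)
    (eq_zero_of_shift_one_hom_eq_zero (hvan B hB Cn hCn))
  have hZY : (Z ⊞ Y) ∈ 𝒜 := hext _ hTu hB (hgood.1 Cn V hCn e)
  exact ⟨Y, hgood.2.2 Y (Z ⊞ Y) biprod.inr biprod.snd biprod.inr_snd hZY, i, j, hT₁⟩

end NExangPaper
end
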